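/- arXiv:1608.08322 — 10 statements merged into one kernel-verified Lean document; each statement's English description precedes it below -/
import Mathlib

section
/- If i, j, k, l are integers with i + j = k + l, then F_i F_j - F_k F_l = (-1)^k F_{i-k} F_{j-k}. -/
section
variable (F : ℤ → ℤ)

theorem fib_aux_add (h0 : F 0 = 0) (h1 : F 1 = 1)
    (hrec' : ∀ n : ℤ, F (n + 1) = F n + F (n - 1)) (m : ℤ) :
    ∀ n : ℤ, F (m + n) = F m * F (n + 1) + F (m - 1) * F n := by
  have key : ∀ n : ℤ, (F (m + n) = F m * F (n + 1) + F (m - 1) * F n) ∧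
      (F (m + n + 1) = F m * F (n + 1 + 1) + F (m - 1) * F (n + 1)) := by
    intro n
    induction n using Int.induction_on with
    | zero =>
      refine ⟨by simp [h0, h1], ?_⟩
      have e1 := hrec' m
      have e2 : F (0 + 1 + 1) = 1 := by
        have := hrec' 1
        norm_num at this ⊢
        linarith [h0]
      norm_num at e2 ⊢
      rw [e2, h1]
      linarith [e1]
    | succ k ih =>
      obtain ⟨ih1, ih2⟩ := ih
      constructor
      · rw [show m + (k + 1 : ℤ) = m + k + 1 by ring]
        exact ih2
      · have e1 := hrec' (m + k + 1)
        have e2 := hrec' ((k : ℤ) + 1 + 1)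
        have e3 := hrec' ((k : ℤ) + 1)
        rw [show m + (k + 1 : ℤ) + 1 = m + k + 1 + 1 by ring]
        rw [show m + k + 1 - 1 = m + k by ring] at e1
        rw [show (k : ℤ) + 1 + 1 - 1 = k + 1 by ring] at e2
        rw [show (k : ℤ) + 1 - 1 = k by ring] at e3
        linear_combination e1 + ih1 + ih2 - F m * e2 - F (m - 1) * e3
    | pred k ih =>
      obtain ⟨ih1, ih2⟩ := ih
      have e1 := hrec' (m + -k)
      rw [show m + -(k : ℤ) - 1 = m + (-k - 1) by ring] at e1
      have e2 := hrec' (-(k:ℤ))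
      rw [show -(k:ℤ) - 1 = -k - 1 by ring] at e2
      have e3 := hrec' (-(k:ℤ) + 1)
      rw [show -(k:ℤ) + 1 - 1 = -k by ring] at e3
      constructor
      · rw [show m + (-(k : ℤ) - 1) = m + (-k - 1) by ring,
            show -(k:ℤ) - 1 + 1 = -k by ring]
        linear_combination -e1 + ih2 - ih1 + F m * e3 + F (m - 1) * e2
      · rw [show m + (-(k : ℤ) - 1) + 1 = m + -k by ring,
            show -(k:ℤ) - 1 + 1 + 1 = -k + 1 by ring,
            show -(k:ℤ) - 1 + 1 = -k by ring]
        exact ih1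
  intro n; exact (key n).1

theorem fib_aux_catalan (h0 : F 0 = 0) (h1 : F 1 = 1)
    (hrec' : ∀ n : ℤ, F (n + 1) = F n + F (n - 1)) :
    ∀ n : ℤ, F (n - 1) * F (n + 1) - F n ^ 2 = (((-1 : ℤˣ) ^ n : ℤˣ) : ℤ) := by
  intro n
  induction n using Int.induction_on with
  | zero =>
    have e := hrec' 0
    norm_num at e ⊢
    rw [h0] at e
    nlinarith [e, h0, h1]
  | succ k ih =>
    have e1 := hrec' ((k:ℤ) + 1)
    rw [show (k:ℤ) + 1 - 1 = k by ring] at e1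
    have e2 := hrec' (k:ℤ)
    have hc : (((-1 : ℤˣ) ^ ((k:ℤ) + 1) : ℤˣ) : ℤ) = -(((-1 : ℤˣ) ^ (k:ℤ) : ℤˣ) : ℤ) := by
      rw [zpow_add_one]
      push_cast
      ring
    rw [show (k:ℤ) + 1 - 1 = k by ring, hc]
    linear_combination F (k:ℤ) * e1 - ih - F ((k:ℤ)+1) * e2
  | pred k ih =>
    have e1 := hrec' (-(k:ℤ))
    have e2 := hrec' (-(k:ℤ) - 1)
    rw [show -(k:ℤ) - 1 + 1 = -k by ring, show -(k:ℤ) - 1 - 1 = -k - 2 by ring] at e2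
    have hc : (((-1 : ℤˣ) ^ (-(k:ℤ) - 1) : ℤˣ) : ℤ) = -(((-1 : ℤˣ) ^ (-(k:ℤ)) : ℤˣ) : ℤ) := by
      rw [show -(k:ℤ) - 1 = -k + -1 by ring, zpow_add]
      simp
    rw [show -(k:ℤ) - 1 - 1 = -k - 2 by ring, show -(k:ℤ) - 1 + 1 = -k by ring, hc]
    linear_combination -ih + F (-(k:ℤ) - 1) * e1 - F (-(k:ℤ)) * e2

end

/-- For the Fibonacci sequence extended to all integers,
if `i + j = k + l` then `F i * F j - F k * F l = (-1)^k * F (i-k) * F (j-k)`. -/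
theorem fib_prod_diff (F : ℤ → ℤ) (h0 : F 0 = 0) (h1 : F 1 = 1)
    (hrec : ∀ n : ℤ, F n = F (n - 1) + F (n - 2))
    (i j k l : ℤ) (hsum : i + j = k + l) :
    F i * F j - F k * F l = ((-1 : ℤˣ) ^ k : ℤˣ) * (F (i - k) * F (j - k)) := by
  have hrec' : ∀ n : ℤ, F (n + 1) = F n + F (n - 1) := by
    intro n
    have := hrec (n + 1)
    rw [show n + 1 - 1 = n by ring, show n + 1 - 2 = n - 1 by ring] at this
    exact this
  obtain ⟨a, rfl⟩ : ∃ a, i = k + a := ⟨i - k, by ring⟩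
  obtain ⟨b, rfl⟩ : ∃ b, j = k + b := ⟨j - k, by ring⟩
  obtain rfl : l = k + (a + b) := by linarith
  rw [show k + a - k = a by ring, show k + b - k = b by ring]
  have H1 := fib_aux_add F h0 h1 hrec' k a
  have H2 := fib_aux_add F h0 h1 hrec' k b
  have H3 := fib_aux_add F h0 h1 hrec' k (a + b)
  have H4 := fib_aux_add F h0 h1 hrec' (a + 1) b
  rw [show a + 1 + b = a + b + 1 by ring, show a + 1 - 1 = a by ring] at H4
  have H5 := fib_aux_add F h0 h1 hrec' (a + 1) (b - 1)
  rw [show a + 1 + (b - 1) = a + b by ring, show a + 1 - 1 = a by ring,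
      show b - 1 + 1 = b by ring] at H5
  have H6 := hrec' b
  have H7 := hrec' k
  have HC := fib_aux_catalan F h0 h1 hrec' k
  rw [H1, H2, H3, H4, H5]
  rw [H7] at HC
  linear_combination (F a * F b) * HC + (F k * F (k - 1) * F a) * H6
end

section
/- If i, j, k, l are integers with i + j = k + l, then F_i F_j = F_k F_l if and only if {i, j} = {k, l} as sets. -/
/-- For the Fibonacci sequence extended to all integers,
if `i + j = k + l` then `F i * F j = F k * F l` if and only if `{i, j} = {k, l}`. -/
theorem fib_prod_eq_iff (F : ℤ → ℤ) (h0 : F 0 = 0) (h1 : F 1 = 1)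
    (hrec : ∀ n : ℤ, F n = F (n - 1) + F (n - 2))
    (i j k l : ℤ) (hsum : i + j = k + l) :
    F i * F j = F k * F l ↔ ({i, j} : Set ℤ) = {k, l} := by
  -- basic consequences of the recurrence
  have step : ∀ n : ℤ, F (n + 2) = F (n + 1) + F n := by
    intro n
    have h := hrec (n + 2)
    rw [show n + 2 - 1 = n + 1 by ring, show n + 2 - 2 = n by ring] at h
    exact h
  have hm1 : F (-1) = 1 := by
    have h := hrec 1
    rw [show (1:ℤ) - 1 = 0 by ring, show (1:ℤ) - 2 = -1 by ring, h0, h1] at h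
    linarith
  -- the addition rule
  have add_rule : ∀ n m : ℤ, F (m + n) = F m * F (n + 1) + F (m - 1) * F n := by
    intro n
    induction n using Int.induction_on with
    | zero => intro m; simp [h0, h1]
    | succ n ih =>
        intro m
        have e1 := ih (m + 1)
        rw [show m + 1 - 1 = m by ring] at e1
        have hm := step (m - 1)
        rw [show m - 1 + 2 = m + 1 by ring, show m - 1 + 1 = m by ring] at hm
        have hn := step n
        rw [show m + ((n:ℤ) + 1) = m + 1 + n by ring,
            show (n:ℤ) + 1 + 1 = n + 2 by ring]
        linear_combination e1 + F (n + 1) * hm - F m * hn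
    | pred n ih =>
        intro m
        have e1 := ih (m - 1)
        rw [show m - 1 - 1 = m - 2 by ring] at e1
        have eN := hrec (-(n:ℤ) + 1)
        rw [show -(n:ℤ) + 1 - 1 = -n by ring, show -(n:ℤ) + 1 - 2 = -n - 1 by ring] at eN
        have eM := hrec m
        rw [show m + (-(n:ℤ) - 1) = m - 1 + -n by ring,
            show -(n:ℤ) - 1 + 1 = -n by ring]
        linear_combination e1 - F (-(n:ℤ)) * eM + F (m - 1) * eN
  -- Cassini-type invariant
  have csq : ∀ k : ℤ, (F (k - 1) ^ 2 + F (k - 1) * F k - F k ^ 2) ^ 2 = 1 := by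
    intro k
    induction k using Int.induction_on with
    | zero => rw [show (0:ℤ) - 1 = -1 by ring, hm1, h0]; ring
    | succ n ih =>
        rw [show (n:ℤ) + 1 - 1 = n by ring]
        have hs := step (n - 1)
        rw [show (n:ℤ) - 1 + 2 = n + 1 by ring, show (n:ℤ) - 1 + 1 = n by ring] at hs
        rw [hs]
        linear_combination ih
    | pred n ih =>
        rw [show -(n:ℤ) - 1 - 1 = -n - 2 by ring]
        have hs := hrec (-(n:ℤ))
        rw [show -(n:ℤ) - 2 = -n - 1 - 1 by ring] at hs ⊢
        have h2 : F (-(n:ℤ) - 1 - 1) = F (-n) - F (-n - 1) := by linarith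
        rw [h2]
        linear_combination ih
  -- Vajda's identity
  have vajda : ∀ a b k : ℤ, F (k + a) * F (k + b) - F k * F (k + a + b)
      = F a * F b * (F (k - 1) ^ 2 + F (k - 1) * F k - F k ^ 2) := by
    intro a b k
    have e1 := add_rule a k
    have e2 := add_rule b k
    have e3 := add_rule (a + b) k
    have f1 := add_rule b a
    have f2 := add_rule (b + 1) a
    rw [show a + (b + 1) = a + b + 1 by ring, show b + 1 + 1 = b + 2 by ring] at f2
    have s1 := hrec (a + 1)
    rw [show a + 1 - 1 = a by ring, show a + 1 - 2 = a - 1 by ring] at s1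
    have s2 := step b
    rw [show k + a + b = k + (a + b) by ring]
    rw [e1, e2, e3, f1, f2, s1, s2]
    ring
  -- positivity on the nonnegative side
  have pos : ∀ n : ℕ, 0 < F ((n : ℤ) + 1) ∧ 0 ≤ F (n : ℤ) := by
    intro n
    induction n with
    | zero => simp [h0, h1]
    | succ n ih =>
        have hs := step n
        constructor
        · push_cast
          rw [show (n:ℤ) + 1 + 1 = n + 2 by ring, hs]
          linarith [ih.1, ih.2]
        · push_cast
          linarith [ih.1]
  -- the sign rule for negative indices
  have key : ∀ n : ℕ, (F (-(n:ℤ)) = (-1:ℤ)^(n+1) * F (n:ℤ)) ∧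
      (F (-((n+1:ℕ):ℤ)) = (-1:ℤ)^(n+1+1) * F ((n+1:ℕ):ℤ)) := by
    intro n
    induction n with
    | zero => norm_num [h0, h1, hm1]
    | succ n ih =>
        refine ⟨ih.2, ?_⟩
        have h := hrec (-(n : ℤ))
        rw [show -(n:ℤ) - 1 = -(((n+1:ℕ):ℤ)) by push_cast; ring,
            show -(n:ℤ) - 2 = -(((n+2:ℕ):ℤ)) by push_cast; ring] at h
        have hs := step n
        have e1 := ih.1
        have e2 := ih.2
        have harg : ((n+2:ℕ):ℤ) = (n:ℤ) + 2 := by push_cast; ring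
        have harg1 : ((n+1:ℕ):ℤ) = (n:ℤ) + 1 := by push_cast; ring
        rw [harg] at h ⊢
        rw [harg1] at e2 h
        rw [show n+1+1+1 = n+3 by ring, show (-1:ℤ)^(n+3) = (-1:ℤ)^(n+1) by
          rw [pow_succ, pow_succ]; ring]
        rw [show n+1+1 = n+2 by ring, show (-1:ℤ)^(n+2) = -((-1:ℤ)^(n+1)) by
          rw [pow_succ]; ring] at e2
        linear_combination -h + e1 - e2 - ((-1:ℤ)^(n+1)) * hs
  -- F vanishes only at 0
  have nonzero : ∀ m : ℤ, m ≠ 0 → F m ≠ 0 := by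
    intro m hm
    rcases lt_or_gt_of_ne hm with hneg | hpos
    · obtain ⟨n, hn⟩ : ∃ n : ℕ, m = -((n:ℤ) + 1) := ⟨(-m - 1).toNat, by omega⟩
      have e := (key (n+1)).1
      rw [show (((n+1:ℕ)):ℤ) = (n:ℤ) + 1 by push_cast; ring] at e
      rw [hn, e]
      have hp := (pos n).1
      exact mul_ne_zero (pow_ne_zero _ (by norm_num)) (by linarith)
    · obtain ⟨n, hn⟩ : ∃ n : ℕ, m = (n:ℤ) + 1 := ⟨(m - 1).toNat, by omega⟩
      have := (pos n).1
      rw [hn]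
      omega
  -- main argument
  constructor
  · intro hF
    have v := vajda (i - k) (j - k) k
    rw [show k + (i - k) = i by ring, show k + (j - k) = j by ring,
        show i + (j - k) = l by omega] at v
    have hc := csq k
    have hcne : F (k - 1) ^ 2 + F (k - 1) * F k - F k ^ 2 ≠ 0 := by
      intro h
      rw [h] at hc
      norm_num at hc
    have hprod : F (i - k) * F (j - k) * (F (k - 1) ^ 2 + F (k - 1) * F k - F k ^ 2) = 0 := by
      rw [← v, hF]; ring
    have h2 : F (i - k) * F (j - k) = 0 := by
      rcases mul_eq_zero.mp hprod with h | h
      · exact h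
      · exact absurd h hcne
    have h3 : i = k ∨ j = k := by
      rcases mul_eq_zero.mp h2 with h | h
      · left; by_contra hne; exact nonzero _ (by omega) h
      · right; by_contra hne; exact nonzero _ (by omega) h
    rw [Set.pair_eq_pair_iff]
    rcases h3 with h | h
    · left; constructor <;> omega
    · right; constructor <;> omega
  · intro hset
    rw [Set.pair_eq_pair_iff] at hset
    rcases hset with ⟨h1, h2⟩ | ⟨h1, h2⟩ <;> rw [h1, h2]
    ring
end

section
/- For every nonnegative integer n, the set {F_i F_j : i, j ≥ 0, i + j = n} has cardinality ⌈(n+1)/2⌉. -/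
open Finset

lemma cat_id (k m : ℕ) : (Nat.fib (k+1) * Nat.fib (k+m) : ℤ) - Nat.fib k * Nat.fib (k+m+1)
    = (-1)^k * Nat.fib m := by
  induction k with
  | zero => simp
  | succ k ih =>
    have h1 : Nat.fib (k+2) = Nat.fib k + Nat.fib (k+1) := Nat.fib_add_two
    have h2 : Nat.fib (k+m+2) = Nat.fib (k+m) + Nat.fib (k+m+1) := Nat.fib_add_two
    have e1 : k+1+m = k+m+1 := by omega
    rw [e1]
    show (Nat.fib (k+2) * Nat.fib (k+m+1) : ℤ) - Nat.fib (k+1) * Nat.fib (k+m+2)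
      = (-1)^(k+1) * Nat.fib m
    rw [h1, h2]
    push_cast
    ring_nf
    ring_nf at ih
    linarith

lemma altsum : ∀ (l : ℕ) (c : ℕ → ℤ), (∀ t, t < l+1 → 0 < c t) →
    (∀ t, t+1 < l+1 → c (t+1) < c t) →
    0 < ∑ t ∈ Finset.range (l+1), (-1)^t * c t ∧
      ∑ t ∈ Finset.range (l+1), (-1)^t * c t ≤ c 0 := by
  intro l
  induction l with
  | zero =>
    intro c hpos _
    constructor
    · simpa using hpos 0 (by omega)
    · simp
  | succ l ih =>
    intro c hpos hdec
    obtain ⟨h1, h2⟩ := ih (fun t => c (t+1)) (fun t ht => hpos (t+1) (by omega))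
      (fun t ht => hdec (t+1) (by omega))
    have hs : ∑ t ∈ Finset.range (l+2), (-1)^t * c t
        = c 0 - ∑ t ∈ Finset.range (l+1), (-1)^t * c (t+1) := by
      rw [Finset.sum_range_succ' (fun t => (-1:ℤ)^t * c t) (l+1)]
      rw [Finset.sum_congr rfl (fun t _ => (by ring :
        ((-1:ℤ))^(t+1) * c (t+1) = -((-1)^t * c (t+1))))]
      rw [Finset.sum_neg_distrib]
      ring
    rw [hs]
    have hd0 := hdec 0 (by omega)
    constructor <;> linarith

lemma step_id (n k : ℕ) (hk : 2*k+1 ≤ n) :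
    (Nat.fib (k+1) * Nat.fib (n-(k+1)) : ℤ) - Nat.fib k * Nat.fib (n-k)
      = (-1)^k * Nat.fib (n-(2*k+1)) := by
  have e1 : n - (k+1) = k + (n-(2*k+1)) := by omega
  have e2 : n - k = k + (n-(2*k+1)) + 1 := by omega
  rw [e1, e2]; exact cat_id k _

lemma inj_ne (n i j : ℕ) (hij : i < j) (hj : 2*j ≤ n) :
    Nat.fib j * Nat.fib (n-j) ≠ Nat.fib i * Nat.fib (n-i) := by
  intro h
  set l := j - i - 1 with hl
  have key : (Nat.fib j * Nat.fib (n-j) : ℤ) - Nat.fib i * Nat.fib (n-i)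
      = (-1)^i * ∑ t ∈ Finset.range (l+1), (-1)^t * (Nat.fib (n - (2*(i+t)+1)) : ℤ) := by
    have tele := Finset.sum_range_sub
      (fun t => (Nat.fib (i+t) * Nat.fib (n-(i+t)) : ℤ)) (l+1)
    have hjl : i + (l+1) = j := by omega
    rw [hjl] at tele
    simp only [Nat.add_zero] at tele
    rw [← tele, Finset.mul_sum]
    apply Finset.sum_congr rfl
    intro t ht
    have htl : t < l + 1 := Finset.mem_range.mp ht
    have h2 : 2*(i+t)+1 ≤ n := by omega
    have hstep := step_id n (i+t) h2
    have e : i + t + 1 = i + (t+1) := by omega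
    rw [e] at hstep
    simp only [hstep]
    rw [pow_add]; ring
  have hS := altsum l (fun t => (Nat.fib (n - (2*(i+t)+1)) : ℤ))
    (by
      intro t ht
      have : 0 < Nat.fib (n - (2*(i+t)+1)) := Nat.fib_pos.mpr (by omega)
      show (0:ℤ) < (Nat.fib (n - (2*(i+t)+1)) : ℤ)
      exact_mod_cast this)
    (by
      intro t ht
      have e : n - (2*(i+(t+1))+1) + 2 = n - (2*(i+t)+1) := by omega
      have hlt : Nat.fib (n - (2*(i+(t+1))+1)) < Nat.fib (n - (2*(i+(t+1))+1) + 2) := by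
        have h1 := Nat.fib_add_two (n := n - (2*(i+(t+1))+1))
        have h2 := Nat.fib_pos.mpr (show 0 < n - (2*(i+(t+1))+1) + 1 by omega)
        omega
      rw [e] at hlt
      show (Nat.fib (n - (2*(i+(t+1))+1)) : ℤ) < (Nat.fib (n - (2*(i+t)+1)) : ℤ)
      exact_mod_cast hlt)
  have hcast : (Nat.fib j * Nat.fib (n-j) : ℤ) = Nat.fib i * Nat.fib (n-i) := by
    exact_mod_cast h
  have heq0 : ((-1:ℤ))^i * ∑ t ∈ Finset.range (l+1),
      (-1)^t * (Nat.fib (n - (2*(i+t)+1)) : ℤ) = 0 := by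
    rw [← key]; exact sub_eq_zero_of_eq hcast
  exact mul_ne_zero (pow_ne_zero _ (by norm_num)) (ne_of_gt hS.1) heq0

/-- For every `n ≥ 0`, the set `{F i * F j : i, j ≥ 0, i + j = n}`
has cardinality `⌈(n+1)/2⌉`. -/
theorem card_fib_products (n : ℕ) :
    {m : ℕ | ∃ i j : ℕ, i + j = n ∧ Nat.fib i * Nat.fib j = m}.ncard = (n + 2) / 2 := by
  have hset : {m : ℕ | ∃ i j : ℕ, i + j = n ∧ Nat.fib i * Nat.fib j = m}
      = ↑((Finset.range (n/2+1)).image (fun i => Nat.fib i * Nat.fib (n-i))) := by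
    ext m
    simp only [Set.mem_setOf_eq, Finset.coe_image, Set.mem_image, Finset.mem_coe,
      Finset.mem_range]
    constructor
    · rintro ⟨i, j, hij, rfl⟩
      by_cases hle : i ≤ n/2
      · exact ⟨i, by omega, by rw [show n - i = j by omega]⟩
      · exact ⟨j, by omega, by rw [show n - j = i by omega, mul_comm]⟩
    · rintro ⟨i, hi, rfl⟩
      exact ⟨i, n-i, by omega, rfl⟩
  rw [hset, Set.ncard_coe_finset]
  rw [Finset.card_image_of_injOn, Finset.card_range]
  · omega
  · intro a ha b hb hab
    simp only [Finset.coe_range, Set.mem_Iio] at ha hb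
    by_contra hne
    rcases Nat.lt_trichotomy a b with hlt | heq | hgt
    · exact inj_ne n a b hlt (by omega) hab.symm
    · exact hne heq
    · exact inj_ne n b a hgt (by omega) hab
end

section
/- Let n ≥ 0 and 1 ≤ m ≤ ⌈(n+1)/2⌉. The m-th smallest element of the set {F_i F_j : i, j ≥ 0, i + j = n} is F_{2m-2-c} F_{n-(2m-2-c)}, where c = 0 if m ≤ ⌊(n+4)/4⌋ or n is odd, and c = 1 otherwise. -/
open Nat List

private lemma fibG (d i : ℕ) :
    (Nat.fib (i+1) * Nat.fib (i+d) : ℤ) - Nat.fib i * Nat.fib (i+d+1) = (-1)^i * Nat.fib d := by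
  induction i with
  | zero => simp
  | succ i ih =>
      have h1 : Nat.fib (i+2) = Nat.fib i + Nat.fib (i+1) := Nat.fib_add_two
      have h2 : Nat.fib (i+d+2) = Nat.fib (i+d) + Nat.fib (i+d+1) := Nat.fib_add_two
      have e1 : i + 1 + d = i + d + 1 := by ring
      have e2 : i + 1 + 1 = i + 2 := by ring
      rw [e1, e2, show i + d + 1 + 1 = i + d + 2 from rfl, h1, h2]
      push_cast
      rw [pow_succ]
      nlinarith [ih]

private lemma fibGeven (d i : ℕ) (hi : Even i) :
    Nat.fib (i+1) * Nat.fib (i+d) = Nat.fib i * Nat.fib (i+d+1) + Nat.fib d := by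
  have h := fibG d i
  rw [hi.neg_one_pow] at h
  zify
  linarith [h]

private lemma fibGodd (d i : ℕ) (hi : Odd i) :
    Nat.fib i * Nat.fib (i+d+1) = Nat.fib (i+1) * Nat.fib (i+d) + Nat.fib d := by
  have h := fibG d i
  rw [hi.neg_one_pow] at h
  zify
  linarith [h]

private lemma fibStepEven (d i : ℕ) (hi : Even i) :
    Nat.fib (i+2) * Nat.fib (i+d) = Nat.fib i * Nat.fib (i+d+2) + Nat.fib d := by
  have h1 : Nat.fib (i+2) = Nat.fib i + Nat.fib (i+1) := Nat.fib_add_two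
  have h2 : Nat.fib (i+d+2) = Nat.fib (i+d) + Nat.fib (i+d+1) := Nat.fib_add_two
  rw [h1, h2, add_mul, fibGeven d i hi]
  ring

private lemma fibStepOdd (d i : ℕ) (hi : Odd i) :
    Nat.fib i * Nat.fib (i+d+2) = Nat.fib (i+2) * Nat.fib (i+d) + Nat.fib d := by
  have h1 : Nat.fib (i+2) = Nat.fib i + Nat.fib (i+1) := Nat.fib_add_two
  have h2 : Nat.fib (i+d+2) = Nat.fib (i+d) + Nat.fib (i+d+1) := Nat.fib_add_two
  rw [h1, h2, mul_add, fibGodd d i hi]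
  ring

private lemma stepEven' (n i : ℕ) (hi : Even i) (h : 2*i+3 ≤ n) :
    Nat.fib i * Nat.fib (n-i) < Nat.fib (i+2) * Nat.fib (n-(i+2)) := by
  set d := n - 2*i - 2 with hd
  have h1 : n - i = i + d + 2 := by omega
  have h2 : n - (i+2) = i + d := by omega
  rw [h1, h2, fibStepEven d i hi]
  have : 0 < Nat.fib d := Nat.fib_pos.mpr (by omega)
  omega

private lemma stepOdd' (n i : ℕ) (hi : Odd i) (h : 2*i+3 ≤ n) :
    Nat.fib (i+2) * Nat.fib (n-(i+2)) < Nat.fib i * Nat.fib (n-i) := by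
  set d := n - 2*i - 2 with hd
  have h1 : n - i = i + d + 2 := by omega
  have h2 : n - (i+2) = i + d := by omega
  rw [h1, h2, fibStepOdd d i hi]
  have : 0 < Nat.fib d := Nat.fib_pos.mpr (by omega)
  omega

private lemma crossEven (n k : ℕ) (hk : k = n/2) (h1 : 1 ≤ k) (he : Even k) :
    Nat.fib k * Nat.fib (n-k) < Nat.fib (k-1) * Nat.fib (n-(k-1)) := by
  -- k even, so i = k-1 odd; use fibGodd with d = n-2k+1
  obtain ⟨i, hi⟩ : ∃ i, k = i + 1 := ⟨k-1, by omega⟩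
  subst hi
  have hio : Odd i := by
    rcases Nat.even_or_odd i with h | h
    · exact absurd he (by simpa [Nat.even_add_one, Nat.not_even_iff_odd] using h)
    · exact h
  set d := n - 2*i - 1 with hd
  have e1 : n - (i+1) = i + d := by omega
  have e2 : i + 1 - 1 = i := by omega
  have e3 : n - i = i + d + 1 := by omega
  rw [e1, e2, e3, fibGodd d i hio]
  have : 0 < Nat.fib d := Nat.fib_pos.mpr (by omega)
  omega

private lemma crossOdd (n k : ℕ) (hk : k = n/2) (h1 : 1 ≤ k) (he : Odd k) :
    Nat.fib (k-1) * Nat.fib (n-(k-1)) < Nat.fib k * Nat.fib (n-k) := by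
  obtain ⟨i, hi⟩ : ∃ i, k = i + 1 := ⟨k-1, by omega⟩
  subst hi
  have hio : Even i := by
    rcases Nat.even_or_odd i with h | h
    · exact h
    · exact absurd he (by simpa [Nat.odd_add_one, Nat.not_odd_iff_even] using h)
  set d := n - 2*i - 1 with hd
  have e1 : n - (i+1) = i + d := by omega
  have e2 : i + 1 - 1 = i := by omega
  have e3 : n - i = i + d + 1 := by omega
  rw [e1, e2, e3, fibGeven d i hio]
  have : 0 < Nat.fib d := Nat.fib_pos.mpr (by omega)
  omega

/-- Let `n ≥ 0` and `1 ≤ m ≤ ⌈(n+1)/2⌉`.  The `m`-th smallest element of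
`{F i * F j : i, j ≥ 0, i + j = n}` is `F (2m-2-c) * F (n-(2m-2-c))`, where `c = 0` if
`m ≤ ⌊(n+4)/4⌋` or `n` is odd, and `c = 1` otherwise. -/
theorem fib_products_mth_smallest (n m : ℕ) (hm1 : 1 ≤ m) (hm2 : m ≤ (n + 2) / 2)
    (c : ℕ) (hc : c = if m ≤ (n + 4) / 4 ∨ n % 2 = 1 then 0 else 1) :
    (((Finset.range (n + 1)).image (fun i => Nat.fib i * Nat.fib (n - i))).sort (· ≤ ·))[m - 1]?
      = some (Nat.fib (2 * m - 2 - c) * Nat.fib (n - (2 * m - 2 - c))) := by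
  classical
  set f : ℕ → ℕ := fun i => Nat.fib i * Nat.fib (n - i) with hf
  set k := n / 2 with hk
  set E := k / 2 + 1 with hE
  set O := k - k / 2 with hO
  set g : ℕ → ℕ := fun t => 2 * (O - 1 - t) + 1 with hg
  set idx : List ℕ := (List.range E).map (fun t => 2 * t) ++ (List.range O).map g with hidx
  set L : List ℕ := idx.map f with hL
  -- L is strictly sorted
  have hchain : List.IsChain (· < ·) L := by
    rw [hL, hidx, List.map_append, List.map_map, List.map_map]
    rw [List.isChain_append]
    refine ⟨?_, ?_, ?_⟩
    · rw [show E = (E - 1) + 1 by omega, List.isChain_map, List.isChain_range_succ]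
      intro t ht
      simp only [Function.comp_apply]
      have e1 : 2 * (t + 1) = 2 * t + 2 := by ring
      rw [e1]
      exact stepEven' n (2 * t) ⟨t, by ring⟩ (by omega)
    · rcases Nat.eq_zero_or_pos O with h0 | h0
      · simp [h0]
      · rw [show O = (O - 1) + 1 by omega, List.isChain_map, List.isChain_range_succ]
        intro t ht
        simp only [Function.comp_apply, hg]
        have e1 : O - 1 - t = (O - 1 - (t + 1)) + 1 := by omega
        rw [e1]
        have e2 : 2 * ((O - 1 - (t + 1)) + 1) + 1 = (2 * (O - 1 - (t + 1)) + 1) + 2 := by ring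
        rw [e2]
        exact stepOdd' n (2 * (O - 1 - (t + 1)) + 1) ⟨O - 1 - (t + 1), by ring⟩ (by omega)
    · intro x hx y hy
      rcases Nat.eq_zero_or_pos O with h0 | h0
      · simp [h0] at hy
      · have hk1 : 1 ≤ k := by omega
        have hxv : x = f (2 * (E - 1)) := by
          rw [List.getLast?_eq_getElem?] at hx
          simp only [List.length_map, List.length_range] at hx
          rw [List.getElem?_map, List.getElem?_range (by omega : E - 1 < E)] at hx
          simp only [Option.map_some, Option.mem_def, Option.some.injEq,
            Function.comp_apply] at hx
          exact hx.symm
        have hyv : y = f (g 0) := by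
          rw [List.head?_eq_getElem?] at hy
          rw [List.getElem?_map, List.getElem?_range (by omega : 0 < O)] at hy
          simp only [Option.map_some, Option.mem_def, Option.some.injEq,
            Function.comp_apply] at hy
          exact hy.symm
        rw [hxv, hyv, hg]
        simp only []
        rcases Nat.even_or_odd k with hke | hko
        · have hke2 : k % 2 = 0 := Nat.even_iff.mp hke
          have e1 : 2 * (E - 1) = k := by omega
          have e2 : 2 * (O - 1 - 0) + 1 = k - 1 := by omega
          rw [e1, e2]
          exact crossEven n k hk hk1 hke
        · have hko2 : k % 2 = 1 := Nat.odd_iff.mp hko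
          have e1 : 2 * (E - 1) = k - 1 := by omega
          have e2 : 2 * (O - 1 - 0) + 1 = k := by omega
          rw [e1, e2]
          exact crossOdd n k hk hk1 hko
  have hsorted : L.Pairwise (· < ·) := List.isChain_iff_pairwise.mp hchain
  have hnodup : L.Nodup := hsorted.nodup
  have hsle : L.Pairwise (· ≤ ·) := hsorted.imp (fun h => le_of_lt h)
  -- toFinset equality
  have hidxM : ∀ x, x ∈ idx ↔ x < k + 1 := by
    intro x
    simp only [hidx, List.mem_append, List.mem_map, List.mem_range, hg]
    constructor
    · rintro (⟨a, ha, rfl⟩ | ⟨a, ha, rfl⟩) <;> omega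
    · intro hx
      rcases Nat.even_or_odd x with ⟨r, hr⟩ | ⟨r, hr⟩
      · exact Or.inl ⟨r, by omega, by omega⟩
      · exact Or.inr ⟨O - 1 - r, by omega, by omega⟩
  have htf : L.toFinset = (Finset.range (n + 1)).image f := by
    ext v
    rw [hL]
    simp only [List.mem_toFinset, List.mem_map, Finset.mem_image, Finset.mem_range]
    constructor
    · rintro ⟨i, hi, rfl⟩
      exact ⟨i, by have := (hidxM i).mp hi; omega, rfl⟩
    · rintro ⟨j, hj, rfl⟩
      by_cases hjk : j ≤ k
      · exact ⟨j, (hidxM j).mpr (by omega), rfl⟩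
      · refine ⟨n - j, (hidxM (n - j)).mpr (by omega), ?_⟩
        simp only [hf]
        rw [show n - (n - j) = j by omega, mul_comm]
  have hsort : ((Finset.range (n + 1)).image f).sort (· ≤ ·) = L := by
    rw [← htf]
    exact (List.toFinset_sort (· ≤ ·) hnodup).mpr hsle
  rw [hsort, hL, hidx, List.map_append, List.map_map, List.map_map]
  have hEO : E + O = k + 1 := by omega
  have hmk : m ≤ k + 1 := by omega
  by_cases hme : m - 1 < E
  · -- even part
    rw [List.getElem?_append]
    simp only [List.length_map, List.length_range]
    rw [if_pos (by omega)]
    rw [List.getElem?_map, List.getElem?_range (by omega : m - 1 < E)]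
    simp only [Option.map_some, Function.comp_apply]
    have hc0 : c = 0 := by rw [hc, if_pos]; left; omega
    have e1 : 2 * (m - 1) = 2 * m - 2 - c := by omega
    rw [hf]
    simp only []
    rw [e1]
  · -- odd part
    rw [List.getElem?_append]
    simp only [List.length_map, List.length_range]
    rw [if_neg (by omega)]
    rw [List.getElem?_map, List.getElem?_range (by omega : m - 1 - E < O)]
    simp only [Option.map_some, Function.comp_apply, hg, hf]
    have e0 : O - 1 - (m - 1 - E) = k + 1 - m := by omega
    rw [e0]
    rcases Nat.even_or_odd n with hne | hno
    · have hn2 : n % 2 = 0 := Nat.even_iff.mp hne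
      have hc1 : c = 1 := by
        rw [hc, if_neg]
        push_neg
        exact ⟨by omega, by omega⟩
      have e1 : 2 * (k + 1 - m) + 1 = n - (2 * m - 2 - c) := by omega
      have e2 : n - (2 * (k + 1 - m) + 1) = 2 * m - 2 - c := by omega
      rw [e2, e1, mul_comm]
    · have hn2 : n % 2 = 1 := Nat.odd_iff.mp hno
      have hc0 : c = 0 := by rw [hc, if_pos]; right; omega
      have e1 : 2 * (k + 1 - m) + 1 = n - (2 * m - 2 - c) := by omega
      have e2 : n - (2 * (k + 1 - m) + 1) = 2 * m - 2 - c := by omega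
      rw [e2, e1, mul_comm]
end

section
/- Every positive integer n has exactly one alternating binary expansion n = A(l_0, l_1, l_2, …, l_d) with d ≥ 1 and l_1 = 1 (where l_0 ≥ 0 and l_2, …, l_d ≥ 1). -/
/-- The alternating binary expansion `A(l₀, …, l_d) = Σ_{i=0}^{d} (-1)^(d-i) 2^(l₀+⋯+lᵢ)`,
where the list is `[l₀, l₁, …, l_d]`. -/
def altBin (l : List ℕ) : ℤ :=
  ∑ i ∈ Finset.range l.length, (-1 : ℤ) ^ (l.length - 1 - i) * 2 ^ ((l.take (i + 1)).sum)

lemma altBin_concat (l : List ℕ) (a : ℕ) :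
    altBin (l ++ [a]) = 2 ^ (l.sum + a) - altBin l := by
  unfold altBin
  rw [List.length_append, List.length_singleton, Finset.sum_range_succ]
  have h1 : ((l ++ [a]).take (l.length + 1)).sum = l.sum + a := by
    rw [List.take_of_length_le (by simp), List.sum_append]; simp
  have h2 : ∀ i ∈ Finset.range l.length,
      (-1 : ℤ) ^ (l.length + 1 - 1 - i) * 2 ^ (((l ++ [a]).take (i + 1)).sum)
      = -((-1 : ℤ) ^ (l.length - 1 - i) * 2 ^ ((l.take (i + 1)).sum)) := by
    intro i hi
    rw [Finset.mem_range] at hi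
    rw [List.take_append_of_le_length (by omega)]
    have : l.length + 1 - 1 - i = (l.length - 1 - i) + 1 := by omega
    rw [this, pow_succ]
    ring
  rw [Finset.sum_congr rfl h2, Finset.sum_neg_distrib, h1]
  have : l.length + 1 - 1 - l.length = 0 := by omega
  rw [this]
  ring

lemma altBin_cons (a : ℕ) (l : List ℕ) :
    altBin (a :: l) = 2 ^ a * altBin (0 :: l) := by
  unfold altBin
  rw [Finset.mul_sum]
  refine Finset.sum_congr (by simp) ?_
  intro i hi
  have h : ((a :: l).take (i + 1)).sum = a + ((0 :: l).take (i + 1)).sum := by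
    rw [List.take_succ_cons, List.take_succ_cons]
    simp
  rw [h, pow_add]
  simp [List.length_cons]
  ring

/-- The odd core `Bq q = altBin (0 :: 1 :: q)`. -/
def Bq (q : List ℕ) : ℤ := altBin (0 :: 1 :: q)

lemma Bq_nil : Bq [] = 1 := by
  simp [Bq, altBin, Finset.sum_range_succ]

lemma Bq_concat (q : List ℕ) (a : ℕ) :
    Bq (q ++ [a]) = 2 ^ (q.sum + a + 1) - Bq q := by
  have h : (0 : ℕ) :: 1 :: (q ++ [a]) = (0 :: 1 :: q) ++ [a] := by simp
  rw [Bq, h, altBin_concat]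
  have : (0 :: 1 :: q).sum + a = q.sum + a + 1 := by simp; omega
  rw [this, Bq]

lemma Bq_bounds : ∀ q : List ℕ, (∀ x ∈ q, 1 ≤ x) →
    Odd (Bq q) ∧ 2 ^ q.sum ≤ Bq q ∧ Bq q < 2 ^ (q.sum + 1) := by
  intro q
  induction q using List.reverseRecOn with
  | nil => intro _; refine ⟨⟨0, by simp [Bq_nil]⟩, by simp [Bq_nil], by simp [Bq_nil]⟩
  | append_singleton r a ih =>
    intro h
    obtain ⟨ho, hl, hu⟩ := ih (fun x hx => h x (by simp [hx]))
    have ha : 1 ≤ a := h a (by simp)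
    have hsum : (r ++ [a]).sum = r.sum + a := by simp
    rw [Bq_concat, hsum]
    have h2 : (2 : ℤ) ^ (r.sum + 1) ≤ 2 ^ (r.sum + a) :=
      pow_le_pow_right₀ one_le_two (by omega)
    have h3 : (2 : ℤ) ^ (r.sum + a + 1) = 2 * 2 ^ (r.sum + a) := by
      rw [pow_succ]; ring
    have h4 : (0 : ℤ) < 2 ^ r.sum := by positivity
    refine ⟨?_, by linarith, by linarith⟩
    have he : Even ((2 : ℤ) ^ (r.sum + a + 1)) := by
      rw [h3]; exact even_two_mul _
    exact he.sub_odd ho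

lemma pow_interval_unique {m : ℤ} {s s' : ℕ} (h1 : 2 ^ s ≤ m) (h2 : m < 2 ^ (s + 1))
    (h3 : 2 ^ s' ≤ m) (h4 : m < 2 ^ (s' + 1)) : s = s' := by
  by_contra hne
  rcases Nat.lt_or_ge s s' with hlt | hge
  · have : (2 : ℤ) ^ (s + 1) ≤ 2 ^ s' := pow_le_pow_right₀ one_le_two (by omega)
    linarith
  · have hlt : s' < s := by omega
    have : (2 : ℤ) ^ (s' + 1) ≤ 2 ^ s := pow_le_pow_right₀ one_le_two (by omega)
    linarith

lemma Bq_injective : ∀ q : List ℕ, (∀ x ∈ q, 1 ≤ x) → ∀ q' : List ℕ, (∀ x ∈ q', 1 ≤ x) →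
    Bq q = Bq q' → q = q' := by
  have hgt : ∀ (r : List ℕ) (a : ℕ), (∀ x ∈ r ++ [a], 1 ≤ x) → 1 < Bq (r ++ [a]) := by
    intro r a h
    have hb := (Bq_bounds (r ++ [a]) h).2.1
    have : (2 : ℤ) ^ 1 ≤ 2 ^ (r ++ [a]).sum := by
      apply pow_le_pow_right₀ one_le_two
      have := h a (by simp)
      simp; omega
    linarith [this, hb]
  intro q
  induction q using List.reverseRecOn with
  | nil =>
    intro _ q' hq' heq
    rcases List.eq_nil_or_concat q' with rfl | ⟨r, a, rfl⟩
    · rfl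
    · exfalso
      rw [List.concat_eq_append] at hq' heq
      have := hgt r a hq'
      rw [← heq, Bq_nil] at this
      exact lt_irrefl 1 this
  | append_singleton r a ih =>
    intro h q' hq' heq
    rcases List.eq_nil_or_concat q' with rfl | ⟨r', a', rfl⟩
    · exfalso
      have := hgt r a h
      rw [heq, Bq_nil] at this
      exact lt_irrefl 1 this
    · rw [List.concat_eq_append] at *
      have hb := Bq_bounds (r ++ [a]) h
      have hb' := Bq_bounds (r' ++ [a']) hq'
      have hs : (r ++ [a]).sum = (r' ++ [a']).sum := by
        apply pow_interval_unique hb.2.1 hb.2.2 (heq ▸ hb'.2.1) (heq ▸ hb'.2.2)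
      have hsum : r.sum + a = r'.sum + a' := by simpa using hs
      rw [Bq_concat, Bq_concat, hsum] at heq
      have hBr : Bq r = Bq r' := by linarith [heq]
      have hr : r = r' := ih (fun x hx => h x (by simp [hx])) r'
        (fun x hx => hq' x (by simp [hx])) hBr
      subst hr
      have : a = a' := by omega
      rw [this]

lemma Bq_exists : ∀ k : ℕ, 0 < k → Odd k → ∃ q : List ℕ, (∀ x ∈ q, 1 ≤ x) ∧ Bq q = k := by
  intro k
  induction k using Nat.strong_induction_on with
  | _ k ih =>
    intro hpos hodd
    rcases eq_or_lt_of_le (show 1 ≤ k from hpos) with h1 | h1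
    · exact ⟨[], by simp, by rw [Bq_nil, ← h1]; norm_num⟩
    · -- k ≥ 2, odd so k ≥ 3
      have hk3 : 3 ≤ k := by
        obtain ⟨c, hc⟩ := hodd; omega
      set s := Nat.log 2 k with hs
      have hle : 2 ^ s ≤ k := Nat.pow_log_le_self 2 (by omega)
      have hlt : k < 2 ^ (s + 1) := Nat.lt_pow_succ_log_self one_lt_two k
      have hs1 : 1 ≤ s := by
        by_contra hcon
        have : s = 0 := by omega
        rw [this] at hlt
        omega
      have hne : k ≠ 2 ^ s := by
        intro hcon
        have hev : Even (2 ^ s) := (Nat.even_pow).mpr ⟨even_two, by omega⟩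
        exact (Nat.not_odd_iff_even.mpr hev) (hcon ▸ hodd)
      have hlt' : 2 ^ s < k := lt_of_le_of_ne hle (Ne.symm hne)
      set m := 2 ^ (s + 1) - k with hm
      have hmpos : 0 < m := by omega
      have hmlt : m < k := by
        have : 2 ^ (s + 1) = 2 * 2 ^ s := by rw [pow_succ]; ring
        omega
      have hmodd : Odd m := Nat.Even.sub_odd (by omega) (by
        refine (Nat.even_pow).mpr ⟨even_two, by omega⟩) hodd
      obtain ⟨q', hq', hBq'⟩ := ih m hmlt hmpos hmodd
      -- m < 2 ^ s
      have hmub : m < 2 ^ s := by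
        have : 2 ^ (s + 1) = 2 * 2 ^ s := by rw [pow_succ]; ring
        omega
      have hqsum : q'.sum < s := by
        have hb := (Bq_bounds q' hq').2.1
        rw [hBq'] at hb
        by_contra hcon
        have : (2 : ℤ) ^ s ≤ 2 ^ q'.sum := pow_le_pow_right₀ one_le_two (by omega)
        have hcast : (m : ℤ) < (2 : ℤ) ^ s := by exact_mod_cast hmub
        linarith
      refine ⟨q' ++ [s - q'.sum], ?_, ?_⟩
      · intro x hx
        rcases List.mem_append.mp hx with h | h
        · exact hq' x h
        · simp at h; omega
      · rw [Bq_concat, hBq']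
        have : q'.sum + (s - q'.sum) + 1 = s + 1 := by omega
        rw [this]
        have hcast : (m : ℤ) = 2 ^ (s + 1) - k := by
          rw [hm]; push_cast [Nat.cast_sub (by omega : k ≤ 2 ^ (s + 1))]; ring
        rw [hcast]; ring

lemma odd_two_pow_mul_inj {a b : ℕ} {x y : ℤ} (hx : Odd x) (hy : Odd y)
    (h : 2 ^ a * x = 2 ^ b * y) : a = b ∧ x = y := by
  have key : ∀ (a b : ℕ) (x y : ℤ), Odd x → a < b → 2 ^ a * x = 2 ^ b * y → False := by
    intro a b x y hx hab h
    have h2 : (2 : ℤ) ^ b = 2 ^ a * 2 ^ (b - a) := by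
      rw [← pow_add]; congr 1; omega
    rw [h2, mul_assoc] at h
    have hx' : x = 2 ^ (b - a) * y := mul_left_cancel₀ (by positivity) h
    have hdvd : (2 : ℤ) ∣ x := by
      rw [hx']
      exact Dvd.dvd.mul_right (dvd_pow_self 2 (by omega)) y
    obtain ⟨c, hc⟩ := hx
    obtain ⟨d, hd⟩ := hdvd
    omega
  have hab : a = b := by
    rcases Nat.lt_trichotomy a b with h1 | h1 | h1
    · exact absurd (key a b x y hx h1 h) not_false
    · exact h1
    · exact absurd (key b a y x hy h1 h.symm) not_false
  subst hab
  exact ⟨rfl, mul_left_cancel₀ (by positivity) h⟩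

lemma exists_odd_factor : ∀ N : ℕ, 0 < N → ∃ a m : ℕ, Odd m ∧ N = 2 ^ a * m := by
  intro N
  induction N using Nat.strong_induction_on with
  | _ N ih =>
    intro hpos
    rcases Nat.even_or_odd N with he | ho
    · obtain ⟨c, hc⟩ := he
      obtain ⟨a, m, hm, hEq⟩ := ih c (by omega) (by omega)
      exact ⟨a + 1, m, hm, by rw [show N = 2 * c by omega, hEq]; ring⟩
    · exact ⟨0, N, ho, by ring⟩

/-- Every positive integer `n` has exactly one alternating binary expansion
`n = A(l₀, l₁, l₂, …, l_d)` with `d ≥ 1` and `l₁ = 1` (where `l₀ ≥ 0` and `l₂, …, l_d ≥ 1`).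
The expansion is encoded as the pair `(l₀, [l₂, …, l_d])`. -/
theorem altBin_unique_one (n : ℤ) (hn : 0 < n) :
    ∃! p : ℕ × List ℕ, (∀ x ∈ p.2, 1 ≤ x) ∧ altBin (p.1 :: 1 :: p.2) = n := by
  have hkey : ∀ (a : ℕ) (q : List ℕ), altBin (a :: 1 :: q) = 2 ^ a * Bq q := by
    intro a q
    exact altBin_cons a (1 :: q)
  have hN : n = ((n.toNat : ℕ) : ℤ) := by omega
  obtain ⟨a, m, hmodd, hfac⟩ := exists_odd_factor n.toNat (by omega)
  have hmpos : 0 < m := by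
    rcases Nat.eq_zero_or_pos m with h | h
    · exfalso; rw [h, mul_zero] at hfac; omega
    · exact h
  obtain ⟨q, hq, hBq⟩ := Bq_exists m hmpos hmodd
  refine ⟨(a, q), ⟨hq, ?_⟩, ?_⟩
  · rw [hkey, hBq, hN, hfac]; push_cast; ring
  · rintro ⟨a', q'⟩ ⟨hq', heq⟩
    rw [hkey] at heq
    have hmain : 2 ^ a' * Bq q' = 2 ^ a * Bq q := by
      rw [heq, hBq, hN, hfac]; push_cast; ring
    have hodd' : Odd (Bq q') := (Bq_bounds q' hq').1
    have hodd : Odd (Bq q) := (Bq_bounds q hq).1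
    obtain ⟨hab, hxy⟩ := odd_two_pow_mul_inj hodd' hodd hmain
    have hqq : q' = q := Bq_injective q' hq' q hq hxy
    simp [hab, hqq]
end

section
/- Every positive integer has exactly two alternating binary expansions. -/
/-- Auxiliary: `auxC r` is such that `altBin (l₀ :: r) = 2^l₀ * auxC r`. -/
def auxC : List ℕ → ℤ
  | [] => 1
  | a :: r => 2 ^ a * auxC r + (-1) ^ (r.length + 1)

lemma altBin_cons_cons (x y : ℕ) (r : List ℕ) :
    altBin (x :: y :: r) = altBin ((x + y) :: r) + (-1) ^ (r.length + 1) * 2 ^ x := by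
  unfold altBin
  simp only [List.length_cons]
  rw [show r.length + 1 + 1 = (r.length + 1) + 1 from rfl, Finset.sum_range_succ']
  congr 1
  apply Finset.sum_congr rfl
  intro i hi
  simp only [Finset.mem_range] at hi
  have h1 : r.length + 1 + 1 - 1 - (i + 1) = r.length + 1 - 1 - i := by omega
  have h2 : ((x :: y :: r).take (i + 1 + 1)).sum = (((x + y) :: r).take (i + 1)).sum := by
    simp only [List.take_succ_cons, List.sum_cons]
    omega
  rw [h1, h2]

lemma altBin_eq (r : List ℕ) : ∀ l₀ : ℕ, altBin (l₀ :: r) = 2 ^ l₀ * auxC r := by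
  induction r with
  | nil => intro l₀; simp [altBin, auxC]
  | cons y r ih =>
    intro l₀
    rw [altBin_cons_cons, ih (l₀ + y)]
    simp only [auxC, pow_add]
    ring

lemma auxC_pos : ∀ r : List ℕ, (∀ x ∈ r, 1 ≤ x) → 1 ≤ auxC r := by
  intro r
  induction r with
  | nil => intro _; simp [auxC]
  | cons a r ih =>
    intro h
    have ha : 1 ≤ a := h a (by simp)
    have hr : 1 ≤ auxC r := ih (fun x hx => h x (by simp [hx]))
    have h2 : (2 : ℤ) ^ 1 ≤ 2 ^ a := pow_le_pow_right₀ one_le_two ha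
    have h3 : (2 : ℤ) ≤ 2 ^ a * auxC r := by
      calc (2 : ℤ) = 2 ^ 1 * 1 := by ring
      _ ≤ 2 ^ a * auxC r := by
        apply mul_le_mul h2 hr (by norm_num) (by positivity)
    simp only [auxC]
    rcases Nat.even_or_odd (r.length + 1) with he | ho
    · rw [he.neg_one_pow]; linarith
    · rw [ho.neg_one_pow]; linarith

lemma auxC_odd : ∀ r : List ℕ, (∀ x ∈ r, 1 ≤ x) → Odd (auxC r) := by
  intro r
  induction r with
  | nil => intro _; simp [auxC]
  | cons a r ih =>
    intro h
    have ha : 1 ≤ a := h a (by simp)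
    have hr : Odd (auxC r) := ih (fun x hx => h x (by simp [hx]))
    have heven : Even ((2 : ℤ) ^ a * auxC r) := by
      obtain ⟨a', rfl⟩ : ∃ a', a = a' + 1 := ⟨a - 1, by omega⟩
      rw [pow_succ]
      exact ⟨2 ^ a' * auxC r, by ring⟩
    have hodd : Odd ((-1 : ℤ) ^ (r.length + 1)) := by
      rcases Nat.even_or_odd (r.length + 1) with he | ho
      · rw [he.neg_one_pow]; exact odd_one
      · rw [ho.neg_one_pow]; exact ⟨-1, by ring⟩
    exact heven.add_odd hodd

lemma auxC_nat (r : List ℕ) (h : ∀ x ∈ r, 1 ≤ x) :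
    ∃ c : ℕ, Odd c ∧ auxC r = (c : ℤ) := by
  refine ⟨(auxC r).toNat, ?_, (Int.toNat_of_nonneg (by linarith [auxC_pos r h])).symm⟩
  have := auxC_odd r h
  rwa [← Int.toNat_of_nonneg (by linarith [auxC_pos r h] : (0:ℤ) ≤ auxC r),
    Int.odd_coe_nat] at this

lemma two_pow_mul_inj {c d : ℕ} (hc : Odd c) (hd : Odd d) :
    ∀ a b : ℕ, 2 ^ a * c = 2 ^ b * d → a = b ∧ c = d := by
  intro a
  induction a with
  | zero =>
    intro b h
    cases b with
    | zero => simpa using h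
    | succ b =>
      exfalso
      have h2 : 2 ∣ c := by
        rw [show c = 2 ^ (b+1) * d by simpa using h]
        exact Dvd.dvd.mul_right (dvd_pow_self 2 (Nat.succ_ne_zero b)) d
      rw [Nat.odd_iff] at hc
      omega
  | succ a ih =>
    intro b h
    cases b with
    | zero =>
      exfalso
      have h2 : 2 ∣ d := by
        rw [show d = 2 ^ (a+1) * c by simpa using h.symm]
        exact Dvd.dvd.mul_right (dvd_pow_self 2 (Nat.succ_ne_zero a)) c
      rw [Nat.odd_iff] at hd
      omega
    | succ b =>
      have h' : 2 * (2 ^ a * c) = 2 * (2 ^ b * d) := by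
        rw [pow_succ, pow_succ] at h; ring_nf; ring_nf at h; linarith
      have := ih b (Nat.eq_of_mul_eq_mul_left (by norm_num) h')
      exact ⟨by omega, this.2⟩

lemma key : ∀ m : ℕ, Odd m → 0 < m →
    (∃! r : List ℕ, (∀ x ∈ r, 1 ≤ x) ∧ Even r.length ∧ auxC r = (m : ℤ)) ∧
    (∃! r : List ℕ, (∀ x ∈ r, 1 ≤ x) ∧ Odd r.length ∧ auxC r = (m : ℤ)) := by
  intro m
  induction m using Nat.strong_induction_on with
  | _ m ih =>
  intro hm hpos
  -- Even-length part
  have heven : ∃! r : List ℕ, (∀ x ∈ r, 1 ≤ x) ∧ Even r.length ∧ auxC r = (m : ℤ) := by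
    rcases eq_or_lt_of_le (show 1 ≤ m from hpos) with h1 | h2
    · -- m = 1
      refine ⟨[], ⟨by simp, by simp, by simp [auxC, ← h1]⟩, ?_⟩
      rintro r ⟨hval, hpar, hC⟩
      cases r with
      | nil => rfl
      | cons a r' =>
        exfalso
        have hodd'' : Odd r'.length := by
          have h : Even (r'.length + 1) := by simpa using hpar
          rcases h with ⟨t, ht⟩; exact ⟨t - 1, by omega⟩
        have hC' : auxC (a :: r') = 2 ^ a * auxC r' + 1 := by
          simp [auxC, (Odd.add_one hodd'').neg_one_pow]
        have hpos' : 1 ≤ auxC r' := auxC_pos r' (fun x hx => hval x (by simp [hx]))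
        have h2a : (2:ℤ) ≤ 2 ^ a * auxC r' := by
          have ha : 1 ≤ a := hval a (by simp)
          calc (2:ℤ) = 2^1*1 := by ring
          _ ≤ 2 ^ a * auxC r' :=
            mul_le_mul (pow_le_pow_right₀ one_le_two ha) hpos' (by norm_num) (by positivity)
        rw [hC', ← h1] at hC
        push_cast at hC
        linarith
    · -- m ≥ 3 (m odd, m ≥ 2)
      set k := m - 1 with hk
      have hk0 : k ≠ 0 := by omega
      have hkdvd : 2 ∣ k := by rw [Nat.odd_iff] at hm; omega
      set v := k.factorization 2 with hv
      set m'' := k / 2 ^ v with hm''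
      have hfac : 2 ^ v * m'' = k := Nat.ordProj_mul_ordCompl_eq_self k 2
      have hm''odd : Odd m'' := by
        have h := Nat.not_dvd_ordCompl Nat.prime_two hk0
        exact Nat.odd_iff.mpr (Nat.two_dvd_ne_zero.mp h)
      have hm''pos : 0 < m'' := Nat.ordCompl_pos 2 hk0
      have hv1 : 1 ≤ v :=
        (Nat.Prime.factorization_pos_of_dvd Nat.prime_two hk0 hkdvd)
      have hm''lt : m'' < m := by
        have : m'' ≤ k := Nat.div_le_self k (2 ^ v)
        omega
      obtain ⟨r', ⟨hval', hpar', hC'⟩, huniq'⟩ := (ih m'' hm''lt hm''odd hm''pos).2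
      refine ⟨v :: r', ⟨?_, ?_, ?_⟩, ?_⟩
      · intro x hx
        rcases List.mem_cons.mp hx with rfl | hx'
        · exact hv1
        · exact hval' x hx'
      · simpa using Odd.add_one hpar'
      · have : auxC (v :: r') = 2 ^ v * auxC r' + 1 := by
          simp [auxC, (Odd.add_one hpar').neg_one_pow]
        rw [this, hC']
        have : ((2:ℤ) ^ v * (m'' : ℤ)) = (k : ℤ) := by exact_mod_cast congrArg (Nat.cast : ℕ → ℤ) hfac
        rw [this]
        push_cast
        omega
      · rintro r ⟨hval, hpar, hC⟩
        cases r with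
        | nil =>
          exfalso
          simp [auxC] at hC
          omega
        | cons a r₀ =>
          have hodd'' : Odd r₀.length := by
            have : Even (r₀.length + 1) := by simpa using hpar
            rcases this with ⟨t, ht⟩; exact ⟨t - 1, by omega⟩
          have hCeq : auxC (a :: r₀) = 2 ^ a * auxC r₀ + 1 := by
            simp [auxC, (Odd.add_one hodd'').neg_one_pow]
          have hval₀ : ∀ x ∈ r₀, 1 ≤ x := fun x hx => hval x (by simp [hx])
          obtain ⟨c, hcodd, hcC⟩ := auxC_nat r₀ hval₀
          have hnat : 2 ^ a * c = k := by
            have : (2:ℤ) ^ a * (c:ℤ) = (k:ℤ) := by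
              rw [← hcC]
              rw [hCeq] at hC
              push_cast
              omega
            exact_mod_cast this
          obtain ⟨hav, hcm⟩ := two_pow_mul_inj hcodd hm''odd a v (by rw [hnat, hfac])
          have : r₀ = r' := huniq' r₀ ⟨hval₀, hodd'', by rw [hcC, hcm]⟩
          rw [hav, this]
  refine ⟨heven, ?_⟩
  -- Odd-length part
  set k := m + 1 with hk
  have hk0 : k ≠ 0 := by omega
  have hkdvd : 2 ∣ k := by rw [Nat.odd_iff] at hm; omega
  set v := k.factorization 2 with hv
  set m'' := k / 2 ^ v with hm''
  have hfac : 2 ^ v * m'' = k := Nat.ordProj_mul_ordCompl_eq_self k 2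
  have hm''odd : Odd m'' := by
    have h := Nat.not_dvd_ordCompl Nat.prime_two hk0
    exact Nat.odd_iff.mpr (Nat.two_dvd_ne_zero.mp h)
  have hm''pos : 0 < m'' := Nat.ordCompl_pos 2 hk0
  have hv1 : 1 ≤ v :=
    Nat.Prime.factorization_pos_of_dvd Nat.prime_two hk0 hkdvd
  have hm''le : m'' ≤ m ∧ (m'' = m → m = 1) := by
    have h2 : 2 * m'' ≤ 2 ^ v * m'' := by
      have : 2 ≤ 2 ^ v := by
        calc 2 = 2 ^ 1 := by norm_num
        _ ≤ 2 ^ v := Nat.pow_le_pow_right (by norm_num) hv1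
      exact Nat.mul_le_mul_right m'' this
    constructor
    · omega
    · intro h; omega
  -- even-length statement at m''
  have hE : ∃! r : List ℕ, (∀ x ∈ r, 1 ≤ x) ∧ Even r.length ∧ auxC r = (m'' : ℤ) := by
    rcases lt_or_eq_of_le hm''le.1 with hlt | heq
    · exact (ih m'' hlt hm''odd hm''pos).1
    · rw [heq]; exact heven
  obtain ⟨r', ⟨hval', hpar', hC'⟩, huniq'⟩ := hE
  refine ⟨v :: r', ⟨?_, ?_, ?_⟩, ?_⟩
  · intro x hx
    rcases List.mem_cons.mp hx with rfl | hx'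
    · exact hv1
    · exact hval' x hx'
  · simpa using Even.add_one hpar'
  · have : auxC (v :: r') = 2 ^ v * auxC r' - 1 := by
      simp only [auxC, (Even.add_one hpar').neg_one_pow]
      ring
    rw [this, hC']
    have h2 : ((2:ℤ) ^ v * (m'' : ℤ)) = (k : ℤ) := by exact_mod_cast congrArg (Nat.cast : ℕ → ℤ) hfac
    rw [h2]
    push_cast
    omega
  · rintro r ⟨hval, hpar, hC⟩
    cases r with
    | nil => exfalso; simpa using hpar
    | cons a r₀ =>
      have heven₀ : Even r₀.length := by
        rcases (by simpa using hpar : Odd (r₀.length + 1)) with ⟨t, ht⟩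
        exact ⟨t, by omega⟩
      have hCeq : auxC (a :: r₀) = 2 ^ a * auxC r₀ - 1 := by
        simp only [auxC, (Even.add_one heven₀).neg_one_pow]
        ring
      have hval₀ : ∀ x ∈ r₀, 1 ≤ x := fun x hx => hval x (by simp [hx])
      obtain ⟨c, hcodd, hcC⟩ := auxC_nat r₀ hval₀
      have hnat : 2 ^ a * c = k := by
        have : (2:ℤ) ^ a * (c:ℤ) = (k:ℤ) := by
          rw [← hcC]
          rw [hCeq] at hC
          push_cast
          omega
        exact_mod_cast this
      obtain ⟨hav, hcm⟩ := two_pow_mul_inj hcodd hm''odd a v (by rw [hnat, hfac])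
      have : r₀ = r' := huniq' r₀ ⟨hval₀, heven₀, by rw [hcC, hcm]⟩
      rw [hav, this]

/-- Every positive integer has exactly two alternating binary expansions.
An expansion of `n` is a tuple `(l₀, l₁, …, l_d)` with `d ≥ 0`, `l₀ ≥ 0` and `l₁, …, l_d ≥ 1`
such that `n = A(l₀, …, l_d)`; it is encoded here as the pair `(l₀, [l₁, …, l_d])`. -/
theorem altBin_two_expansions (n : ℤ) (hn : 0 < n) :
    ∃ e₁ e₂ : ℕ × List ℕ, e₁ ≠ e₂ ∧
      ∀ e : ℕ × List ℕ,
        ((∀ x ∈ e.2, 1 ≤ x) ∧ altBin (e.1 :: e.2) = n) ↔ (e = e₁ ∨ e = e₂) := by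
  set N := n.toNat with hNdef
  have hN : (N : ℤ) = n := Int.toNat_of_nonneg hn.le
  have hN0 : N ≠ 0 := by omega
  set v := N.factorization 2 with hv
  set M := N / 2 ^ v with hM
  have hfac : 2 ^ v * M = N := Nat.ordProj_mul_ordCompl_eq_self N 2
  have hModd : Odd M := by
    have h := Nat.not_dvd_ordCompl Nat.prime_two hN0
    exact Nat.odd_iff.mpr (Nat.two_dvd_ne_zero.mp h)
  have hMpos : 0 < M := Nat.ordCompl_pos 2 hN0
  obtain ⟨⟨E, ⟨hEval, hEpar, hEC⟩, hEuniq⟩, ⟨O, ⟨hOval, hOpar, hOC⟩, hOuniq⟩⟩ :=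
    key M hModd hMpos
  refine ⟨(v, E), (v, O), ?_, ?_⟩
  · intro h
    have : E = O := by simpa using congrArg Prod.snd h
    rw [this] at hEpar
    exact (Nat.not_odd_iff_even.mpr hEpar) hOpar
  · rintro ⟨a, r⟩
    constructor
    · rintro ⟨hval, hA⟩
      simp only at hval hA ⊢
      rw [altBin_eq] at hA
      obtain ⟨c, hcodd, hcC⟩ := auxC_nat r hval
      have hnat : 2 ^ a * c = N := by
        have : (2:ℤ) ^ a * (c:ℤ) = (N:ℤ) := by rw [← hcC, hA, hN]
        exact_mod_cast this
      obtain ⟨hav, hcm⟩ := two_pow_mul_inj hcodd hModd a v (by rw [hnat, hfac])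
      have hCr : auxC r = (M : ℤ) := by rw [hcC, hcm]
      rcases Nat.even_or_odd r.length with hp | hp
      · left
        have : r = E := hEuniq r ⟨hval, hp, hCr⟩
        rw [hav, this]
      · right
        have : r = O := hOuniq r ⟨hval, hp, hCr⟩
        rw [hav, this]
    · rintro (h | h) <;> (
        injection h with h1 h2
        subst h1; subst h2)
      · refine ⟨hEval, ?_⟩
        rw [altBin_eq, hEC]
        rw [← hN]
        exact_mod_cast congrArg (Nat.cast : ℕ → ℤ) hfac
      · refine ⟨hOval, ?_⟩
        rw [altBin_eq, hOC]
        rw [← hN]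
        exact_mod_cast congrArg (Nat.cast : ℕ → ℤ) hfac
end

section
/- For every r ≥ 0, the set of values {s(n) : 2^r ≤ n ≤ 2^{r+1}} of the r-th row of Stern's diatomic array equals {K(l_1,…,l_d) : d ≥ 1, l_1,…,l_d ≥ 1, l_1 = l_d = 1, l_1+⋯+l_d ≤ r+1}. -/
/-- The Stern sequence: `s 0 = 0`, `s 1 = 1`, `s (2n) = s n`, `s (2n+1) = s n + s (n+1)`. -/
def stern : ℕ → ℕ
  | 0 => 0
  | 1 => 1
  | n + 2 =>
    if n % 2 = 0 then stern (n / 2 + 1)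
    else stern ((n + 1) / 2) + stern ((n + 1) / 2 + 1)
decreasing_by all_goals omega

/-- The continuant `K`: `K() = 1`, `K(x1) = x1`, and
`K(x1,...,xd) = xd * K(x1,...,x(d-1)) + K(x1,...,x(d-2))` for `d >= 2`
(equivalently, by the symmetry of continuants,
`K(x1,...,xd) = x1 * K(x2,...,xd) + K(x3,...,xd)`). -/
def contN : List ℕ → ℕ
  | [] => 1
  | [x] => x
  | x :: y :: t => x * contN (y :: t) + contN t

lemma stern_two_mul (m : ℕ) : stern (2 * m) = stern m := by
  match m with
  | 0 => rfl
  | m + 1 =>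
    show stern (2 * m + 2) = stern (m + 1)
    rw [stern]
    have h : (2 * m) % 2 = 0 := by omega
    rw [if_pos h]
    congr 1
    omega

lemma stern_two_mul_add_one (m : ℕ) : stern (2 * m + 1) = stern m + stern (m + 1) := by
  match m with
  | 0 => simp [stern]
  | m + 1 =>
    show stern (2 * m + 1 + 2) = stern (m + 1) + stern (m + 2)
    rw [stern]
    have h : ¬ ((2 * m + 1) % 2 = 0) := by omega
    rw [if_neg h]
    have h1 : (2 * m + 1 + 1) / 2 = m + 1 := by omega
    rw [h1]

lemma stern_pow_mul (j n : ℕ) : stern (2 ^ j * n) = stern n := by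
  induction j with
  | zero => simp
  | succ j ih =>
    have : 2 ^ (j + 1) * n = 2 * (2 ^ j * n) := by ring
    rw [this, stern_two_mul, ih]

lemma stern_one : stern 1 = 1 := by simp [stern]

lemma stern_pow (x : ℕ) : stern (2 ^ x) = 1 := by
  rw [show (2:ℕ)^x = 2^x*1 by ring, stern_pow_mul, stern_one]

lemma stern_pow_sub_one (x : ℕ) (hx : 1 ≤ x) : stern (2 ^ x - 1) = x := by
  induction x with
  | zero => omega
  | succ x ih =>
    rcases Nat.eq_zero_or_pos x with h | h
    · subst h; simp [stern]
    · have h2 : 1 ≤ 2 ^ x := Nat.one_le_two_pow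
      have : 2 ^ (x + 1) - 1 = 2 * (2 ^ x - 1) + 1 := by
        have : 2 ^ (x + 1) = 2 * 2 ^ x := by ring
        omega
      rw [this, stern_two_mul_add_one]
      have h3 : 2 ^ x - 1 + 1 = 2 ^ x := by omega
      rw [h3, stern_pow, ih h]

lemma stern_pow_mul_add_one (j n : ℕ) (hn : 1 ≤ n) :
    stern (2 ^ j * n + 1) = j * stern n + stern (n + 1) := by
  induction j with
  | zero => simp
  | succ j ih =>
    have : 2 ^ (j + 1) * n + 1 = 2 * (2 ^ j * n) + 1 := by ring
    rw [this, stern_two_mul_add_one, stern_pow_mul, ih]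
    ring
lemma contN_nil : contN [] = 1 := rfl
lemma contN_single (x : ℕ) : contN [x] = x := rfl
lemma contN_cons2 (x y : ℕ) (t : List ℕ) :
    contN (x :: y :: t) = x * contN (y :: t) + contN t := rfl

lemma contN_cons (x : ℕ) (t : List ℕ) (ht : t ≠ []) :
    contN (x :: t) = x * contN t + contN t.tail := by
  match t with
  | [] => simp at ht
  | y :: t' => rfl

lemma contN_succ_head (x : ℕ) (t : List ℕ) :
    contN ((x + 1) :: t) = contN (x :: t) + contN t := by
  match t with
  | [] => simp [contN]
  | y :: t' => simp [contN_cons2]; ring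

lemma contN_right : ∀ (t : List ℕ) (x : ℕ), contN (t ++ [x + 1, 1]) = contN (t ++ [x + 2])
  | [], x => by simp [contN_cons2, contN_single, contN_nil]
  | [a], x => by simp [contN_cons2, contN_single, contN_nil]
  | a :: b :: t, x => by
    have h1 := contN_right (b :: t) x
    have h2 := contN_right t x
    simp only [List.cons_append] at *
    rw [contN_cons2, contN_cons2, h1, h2]

lemma one_le_sum (ls : List ℕ) (h : ls ≠ []) (hpos : ∀ z ∈ ls, 1 ≤ z) : 1 ≤ ls.sum := by
  match ls with
  | x :: t =>
    have := hpos x (by simp)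
    simp only [List.sum_cons]
    omega

/-- parity normalization: make the length odd, keeping sum and continuant -/
lemma contN_odd_normalize (ls : List ℕ) (h : ls ≠ []) (hpos : ∀ z ∈ ls, 1 ≤ z) :
    ∃ ms : List ℕ, ms ≠ [] ∧ (∀ z ∈ ms, 1 ≤ z) ∧ ms.length % 2 = 1 ∧
      ms.sum = ls.sum ∧ contN ms = contN ls := by
  rcases Nat.even_or_odd ls.length with he | ho
  case inr => exact ⟨ls, h, hpos, by simpa [Nat.odd_iff] using ho, rfl, rfl⟩
  · rcases ls.eq_nil_or_concat' with rfl | ⟨t, x, rfl⟩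
    · simp at h
    · have hx : 1 ≤ x := hpos x (by simp)
      rcases Nat.lt_or_ge x 2 with hx2 | hx2
      · -- x = 1, so t ≠ []
        have hx1 : x = 1 := by omega
        subst hx1
        have ht : t ≠ [] := by
          rintro rfl
          simp [Nat.even_iff] at he
        rcases t.eq_nil_or_concat' with rfl | ⟨u, y, rfl⟩
        · simp at ht
        · have hy : 1 ≤ y := hpos y (by simp)
          refine ⟨u ++ [y + 1], by simp, ?_, ?_, ?_, ?_⟩
          · intro z hz
            simp at hz
            rcases hz with hz | hz
            · exact hpos z (by simp [hz])
            · omega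
          · simp only [List.length_append, List.length_cons, List.length_nil,
              Nat.even_iff] at he ⊢
            omega
          · simp [List.sum_append] <;> omega
          · have := contN_right u (y - 1)
            have h1 : y - 1 + 1 = y := by omega
            have h2 : y - 1 + 2 = y + 1 := by omega
            rw [h1, h2] at this
            rw [← this]
            congr 1
            simp
      · -- x ≥ 2
        refine ⟨t ++ [x - 1, 1], by simp, ?_, ?_, ?_, ?_⟩
        · intro z hz
          simp at hz
          rcases hz with hz | hz | hz
          · exact hpos z (by simp [hz])
          · omega
          · omega
        · simp only [List.length_append, List.length_cons, List.length_nil,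
            Nat.even_iff] at he ⊢
          omega
        · simp [List.sum_append] <;> omega
        · have := contN_right t (x - 2)
          have h1 : x - 2 + 1 = x - 1 := by omega
          have h2 : x - 2 + 2 = x := by omega
          rw [h1, h2] at this
          rw [this]

/-- endpoint normalization: make head and last equal to 1, keeping sum and continuant -/
lemma contN_ends_normalize (ls : List ℕ) (h : ls ≠ []) (hpos : ∀ z ∈ ls, 1 ≤ z) :
    ∃ ms : List ℕ, ms ≠ [] ∧ (∀ z ∈ ms, 1 ≤ z) ∧ ms.head? = some 1 ∧
      ms.getLast? = some 1 ∧ ms.sum = ls.sum ∧ contN ms = contN ls := by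
  -- first, left-normalize
  obtain ⟨ls1, h1ne, h1pos, h1head, h1sum, h1cont⟩ :
      ∃ ls1 : List ℕ, ls1 ≠ [] ∧ (∀ z ∈ ls1, 1 ≤ z) ∧ ls1.head? = some 1 ∧
        ls1.sum = ls.sum ∧ contN ls1 = contN ls := by
    match ls with
    | x :: t =>
      have hx : 1 ≤ x := hpos x (by simp)
      rcases Nat.lt_or_ge x 2 with hx2 | hx2
      · exact ⟨x :: t, by simp, hpos, by simp; omega, rfl, rfl⟩
      · refine ⟨1 :: (x - 1) :: t, by simp, ?_, by simp, by simp; omega, ?_⟩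
        · intro z hz
          simp at hz
          rcases hz with hz | hz | hz
          · omega
          · omega
          · exact hpos z (by simp [hz])
        · rw [contN_cons2]
          have := contN_succ_head (x - 1) t
          have hxx : x - 1 + 1 = x := by omega
          rw [hxx] at this
          omega
  -- now right-normalize
  rcases ls1.eq_nil_or_concat' with rfl | ⟨u, y, rfl⟩
  · simp at h1ne
  · have hy : 1 ≤ y := h1pos y (by simp)
    rcases Nat.lt_or_ge y 2 with hy2 | hy2
    · have hy1 : y = 1 := by omega
      subst hy1
      exact ⟨u ++ [1], h1ne, h1pos, h1head, by simp, h1sum, h1cont⟩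
    ·
      have hu : u ≠ [] := by
        rintro rfl
        simp at h1head
        omega
      refine ⟨u ++ [y - 1, 1], by simp, ?_, ?_, by simp, ?_, ?_⟩
      · intro z hz
        simp at hz
        rcases hz with hz | hz | hz
        · exact h1pos z (by simp [hz])
        · omega
        · omega
      · match u, hu with
        | a :: u', _ =>
          simp at h1head ⊢
          exact h1head
      · simp [List.sum_append] at h1sum ⊢
        omega
      · have := contN_right u (y - 2)
        have ha : y - 2 + 1 = y - 1 := by omega
        have hb : y - 2 + 2 = y := by omega
        rw [ha, hb] at this
        rw [this, h1cont]

lemma stern_mul_pow_add (x m : ℕ) :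
    stern (m * 2 ^ x + (2 ^ x - 1)) = stern m + x * stern (m + 1) := by
  induction x with
  | zero => simp
  | succ x ih =>
    have hp : 1 ≤ 2 ^ x := Nat.one_le_two_pow
    have hr : m * 2 ^ (x + 1) + (2 ^ (x + 1) - 1) = 2 * (m * 2 ^ x + (2 ^ x - 1)) + 1 := by
      have : m * 2 ^ (x + 1) = 2 * (m * 2 ^ x) := by ring
      rw [this]
      have h2 : 2 ^ (x + 1) = 2 * 2 ^ x := by ring
      omega
    rw [hr, stern_two_mul_add_one, ih]
    have hq' : m * 2 ^ x + (2 ^ x - 1) + 1 = 2 ^ x * (m + 1) := by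
      have h3 : 2 ^ x * (m + 1) = m * 2 ^ x + 2 ^ x := by ring
      omega
    rw [hq', stern_pow_mul]
    ring

/-- Forward construction: from an odd-length positive list to an odd number. -/
lemma exists_stern_of_contN : ∀ (N : ℕ) (ls : List ℕ), ls.length ≤ N → ls ≠ [] →
    (∀ z ∈ ls, 1 ≤ z) → ls.length % 2 = 1 →
    ∃ q : ℕ, 2 ^ (ls.sum - 1) ≤ q ∧ q < 2 ^ ls.sum ∧
      stern q = contN ls ∧ stern (q + 1) = contN ls.tail := by
  intro N
  induction N with
  | zero => intro ls hlen hne _ _; interval_cases h : ls.length <;> simp_all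
  | succ N ih =>
    intro ls hlen hne hpos hodd
    match ls with
    | [x] =>
      have hx : 1 ≤ x := hpos x (by simp)
      refine ⟨2 ^ x - 1, ?_, ?_, ?_, ?_⟩
      · have h1 : 2 ^ x = 2 * 2 ^ (x - 1) := by
          rw [← pow_succ']
          congr 1
          omega
        simp only [List.sum_cons, List.sum_nil, Nat.add_zero]
        have : (1:ℕ) ≤ 2 ^ (x - 1) := Nat.one_le_two_pow
        omega
      · have : (1:ℕ) ≤ 2 ^ x := Nat.one_le_two_pow
        simp only [List.sum_cons, List.sum_nil, Nat.add_zero]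
        omega
      · rw [stern_pow_sub_one x hx, contN_single]
      · have : 2 ^ x - 1 + 1 = 2 ^ x := by
          have : (1:ℕ) ≤ 2 ^ x := Nat.one_le_two_pow
          omega
        rw [this, stern_pow]
        rfl
    | x :: y :: t =>
      have ht : t ≠ [] := by
        rintro rfl
        simp at hodd
      have hx : 1 ≤ x := hpos x (by simp)
      have hy : 1 ≤ y := hpos y (by simp)
      obtain ⟨q', hq1, hq2, hq3, hq4⟩ := ih t (by simp at hlen ⊢; omega) ht
        (fun z hz => hpos z (by simp [hz])) (by simp at hodd ⊢; omega)
      have hq'pos : 1 ≤ q' := le_trans Nat.one_le_two_pow hq1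
      have hts : 1 ≤ t.sum := one_le_sum t ht (fun z hz => hpos z (by simp [hz]))
      refine ⟨(2 ^ y * q') * 2 ^ x + (2 ^ x - 1), ?_, ?_, ?_, ?_⟩
      · -- lower bound
        have h1 : (2:ℕ) ^ ((x :: y :: t).sum - 1) = 2 ^ (x + y) * 2 ^ (t.sum - 1) := by
          rw [← pow_add]
          congr 1
          simp only [List.sum_cons]
          omega
        rw [h1]
        calc 2 ^ (x + y) * 2 ^ (t.sum - 1) ≤ 2 ^ (x + y) * q' :=
              Nat.mul_le_mul_left _ hq1
          _ = (2 ^ y * q') * 2 ^ x := by ring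
          _ ≤ (2 ^ y * q') * 2 ^ x + (2 ^ x - 1) := Nat.le_add_right _ _
      · -- upper bound
        have h1 : (2:ℕ) ^ ((x :: y :: t).sum) = 2 ^ (x + y) * 2 ^ t.sum := by
          rw [← pow_add]
          congr 1
          simp only [List.sum_cons]
          omega
        rw [h1]
        have h2 : (2 ^ y * q') * 2 ^ x + (2 ^ x - 1) < (2 ^ y * (q' + 1)) * 2 ^ x := by
          have : (2 ^ y * (q' + 1)) * 2 ^ x = (2 ^ y * q') * 2 ^ x + 2 ^ y * 2 ^ x := by ring
          have hyx : (1:ℕ) ≤ 2 ^ y * 2 ^ x := Nat.one_le_iff_ne_zero.mpr (by positivity)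
          have hx1 : (1:ℕ) ≤ 2 ^ x := Nat.one_le_two_pow
          have hxy : (2:ℕ) ^ x ≤ 2 ^ y * 2 ^ x := Nat.le_mul_of_pos_left _ (by positivity)
          omega
        have h3 : (2 ^ y * (q' + 1)) * 2 ^ x ≤ 2 ^ (x + y) * 2 ^ t.sum := by
          have : (2 ^ y * (q' + 1)) * 2 ^ x = 2 ^ (x + y) * (q' + 1) := by
            rw [pow_add]; ring
          rw [this]
          exact Nat.mul_le_mul_left _ (by omega)
        omega
      · -- stern value
        rw [stern_mul_pow_add, stern_pow_mul]
        have h5 : 2 ^ y * q' + 1 = 2 ^ y * q' + 1 := rfl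
        rw [stern_pow_mul_add_one y q' hq'pos, hq3, hq4]
        rw [contN_cons2, contN_cons y t ht]
        ring
      · -- successor value
        have h6 : (2 ^ y * q') * 2 ^ x + (2 ^ x - 1) + 1 = 2 ^ x * (2 ^ y * q' + 1) := by
          have hx1 : (1:ℕ) ≤ 2 ^ x := Nat.one_le_two_pow
          have : 2 ^ x * (2 ^ y * q' + 1) = (2 ^ y * q') * 2 ^ x + 2 ^ x := by ring
          omega
        rw [h6, stern_pow_mul, stern_pow_mul_add_one y q' hq'pos, hq3, hq4]
        rw [show (x :: y :: t).tail = y :: t from rfl, contN_cons y t ht]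

/-- Reverse: every odd number's Stern value is a continuant. -/
lemma exists_contN_of_odd : ∀ q : ℕ, q % 2 = 1 →
    ∃ ls : List ℕ, ls ≠ [] ∧ (∀ z ∈ ls, 1 ≤ z) ∧ 2 ^ (ls.sum - 1) ≤ q ∧ q < 2 ^ ls.sum ∧
      stern q = contN ls ∧ stern (q + 1) = contN ls.tail := by
  intro q
  induction q using Nat.strong_induction_on with
  | _ q IH =>
    intro hq
    rcases Nat.lt_or_ge q 3 with h3 | h3
    · -- q = 1
      have hq1 : q = 1 := by omega
      subst hq1
      refine ⟨[1], by simp, by simp, by simp, by simp, by rw [contN_single, stern_one],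
        ?_⟩
      rw [show (1:ℕ) + 1 = 2 * 1 from rfl, stern_two_mul, stern_one]
      rfl
    · -- q = 2m+1, m ≥ 1
      set m := q / 2 with hm
      have hq2 : q = 2 * m + 1 := by omega
      have hm1 : 1 ≤ m := by omega
      obtain ⟨j, q', hq'odd, hmm⟩ := Nat.exists_eq_pow_mul_and_not_dvd (n := m)
        (by omega) 2 (by norm_num)
      have hq'odd' : q' % 2 = 1 := by omega
      have hq'pos : 1 ≤ q' := by omega
      have hq'lt : q' < q := by
        have : q' ≤ m := by
          calc q' ≤ 2 ^ j * q' := Nat.le_mul_of_pos_left _ (by positivity)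
            _ = m := hmm.symm
        omega
      obtain ⟨ls, hne, hpos, hb1, hb2, hc1, hc2⟩ := IH q' hq'lt hq'odd'
      have hsum1 : 1 ≤ ls.sum := one_le_sum ls hne hpos
      rcases Nat.eq_zero_or_pos j with hj | hj
      · -- j = 0 : m = q' odd
        subst hj
        simp only [pow_zero, one_mul] at hmm
        subst hmm
        match ls, hne with
        | x :: t, _ =>
          refine ⟨(x + 1) :: t, by simp, ?_, ?_, ?_, ?_, ?_⟩
          · intro z hz
            simp at hz
            rcases hz with hz | hz
            · omega
            · exact hpos z (by simp [hz])
          · simp only [List.sum_cons] at hb1 ⊢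
            have he : x + 1 + t.sum - 1 = (x + t.sum - 1) + 1 := by
              have := hpos x (by simp)
              omega
            rw [he, pow_succ]
            omega
          · simp only [List.sum_cons] at hb2 ⊢
            have he : x + 1 + t.sum = (x + t.sum) + 1 := by omega
            rw [he, pow_succ]
            omega
          · rw [hq2, stern_two_mul_add_one, contN_succ_head, hc1, hc2]
            rfl
          · have : q + 1 = 2 * (m + 1) := by omega
            rw [this, stern_two_mul, hc2]
            rfl
      · -- j ≥ 1
        refine ⟨1 :: j :: ls, by simp, ?_, ?_, ?_, ?_, ?_⟩
        · intro z hz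
          simp at hz
          rcases hz with hz | hz | hz
          · omega
          · omega
          · exact hpos z (by simp [hz])
        · -- 2 ^ (1 + j + sum - 1) ≤ q
          simp only [List.sum_cons]
          have he : 1 + (j + ls.sum) - 1 = (j + 1) + (ls.sum - 1) := by omega
          rw [he, pow_add]
          calc 2 ^ (j + 1) * 2 ^ (ls.sum - 1) ≤ 2 ^ (j + 1) * q' :=
                Nat.mul_le_mul_left _ hb1
            _ = 2 * m := by rw [hmm]; ring
            _ ≤ q := by omega
        · -- q < 2 ^ (1 + j + sum)
          simp only [List.sum_cons]
          have he : 1 + (j + ls.sum) = (j + 1) + ls.sum := by omega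
          rw [he, pow_add]
          have h1 : 2 * m = 2 ^ (j + 1) * q' := by rw [hmm]; ring
          have h2 : 2 ^ (j + 1) * q' + 2 ^ (j + 1) ≤ 2 ^ (j + 1) * 2 ^ ls.sum := by
            have : 2 ^ (j + 1) * q' + 2 ^ (j + 1) = 2 ^ (j + 1) * (q' + 1) := by ring
            rw [this]
            exact Nat.mul_le_mul_left _ (by omega)
          have h4 : (2:ℕ) ≤ 2 ^ (j + 1) := by
            calc (2:ℕ) = 2 ^ 1 := rfl
              _ ≤ 2 ^ (j + 1) := Nat.pow_le_pow_right (by norm_num) (by omega)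
          omega
        · -- stern q = contN (1 :: j :: ls)
          have hstm : stern m = contN ls := by rw [hmm, stern_pow_mul, hc1]
          have hstm1 : stern (m + 1) = contN (j :: ls) := by
            rw [hmm, stern_pow_mul_add_one j q' hq'pos, hc1, hc2, contN_cons j ls hne]
          rw [hq2, stern_two_mul_add_one, hstm, hstm1, contN_cons2]
          ring
        · -- stern (q+1) = contN (j :: ls)
          have : q + 1 = 2 * (m + 1) := by omega
          rw [this, stern_two_mul, hmm, stern_pow_mul_add_one j q' hq'pos, hc1, hc2]
          rw [show (1 :: j :: ls).tail = j :: ls from rfl, contN_cons j ls hne]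


/-- For every `r >= 0`, the set of values of the `r`-th row of Stern's
diatomic array equals the set of continuants `K(l1,...,ld)` with `d >= 1`, all `li >= 1`,
`l1 = ld = 1` and `l1 + ... + ld <= r + 1`. -/
theorem stern_row_eq_continuants (r : ℕ) :
    {k : ℕ | ∃ n : ℕ, 2 ^ r ≤ n ∧ n ≤ 2 ^ (r + 1) ∧ stern n = k} =
    {k : ℕ | ∃ ls : List ℕ, ls ≠ [] ∧ (∀ x ∈ ls, 1 ≤ x) ∧
      ls.head? = some 1 ∧ ls.getLast? = some 1 ∧ ls.sum ≤ r + 1 ∧ contN ls = k} := by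
  ext k
  simp only [Set.mem_setOf_eq]
  constructor
  · rintro ⟨n, hn1, hn2, rfl⟩
    have hnpos : 1 ≤ n := le_trans Nat.one_le_two_pow hn1
    obtain ⟨j, q, hqodd, rfl⟩ := Nat.exists_eq_pow_mul_and_not_dvd (n := n)
      (by omega) 2 (by norm_num)
    have hqodd' : q % 2 = 1 := by omega
    obtain ⟨ls, hne, hpos, hb1, hb2, hc1, _⟩ := exists_contN_of_odd q hqodd'
    have hqle : q ≤ 2 ^ (r + 1) := by
      calc q ≤ 2 ^ j * q := Nat.le_mul_of_pos_left _ (by positivity)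
        _ ≤ 2 ^ (r + 1) := hn2
    have hqlt : q < 2 ^ (r + 1) := by
      rcases Nat.lt_or_ge q (2 ^ (r + 1)) with h | h
      · exact h
      · exfalso
        have : q = 2 ^ (r + 1) := by omega
        apply hqodd
        rw [this]
        exact dvd_pow_self 2 (by omega)
    have hsum : ls.sum ≤ r + 1 := by
      by_contra hs
      push_neg at hs
      have : (2:ℕ) ^ (r + 1) ≤ 2 ^ (ls.sum - 1) :=
        Nat.pow_le_pow_right (by norm_num) (by omega)
      omega
    obtain ⟨ms, hmne, hmpos, hmh, hml, hmsum, hmcont⟩ := contN_ends_normalize ls hne hpos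
    exact ⟨ms, hmne, hmpos, hmh, hml, by omega, by rw [hmcont, ← hc1, stern_pow_mul]⟩
  · rintro ⟨ls, hne, hpos, _, _, hsum, rfl⟩
    obtain ⟨ms, hmne, hmpos, hmodd, hmsum, hmcont⟩ := contN_odd_normalize ls hne hpos
    obtain ⟨q, hb1, hb2, hc1, _⟩ :=
      exists_stern_of_contN ms.length ms le_rfl hmne hmpos hmodd
    have hs1 : 1 ≤ ms.sum := one_le_sum ms hmne hmpos
    have hsr : ms.sum ≤ r + 1 := by omega
    refine ⟨2 ^ (r + 1 - ms.sum) * q, ?_, ?_, ?_⟩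
    · calc (2:ℕ) ^ r = 2 ^ (r + 1 - ms.sum) * 2 ^ (ms.sum - 1) := by
            rw [← pow_add]
            congr 1
            omega
        _ ≤ 2 ^ (r + 1 - ms.sum) * q := Nat.mul_le_mul_left _ hb1
    · calc 2 ^ (r + 1 - ms.sum) * q ≤ 2 ^ (r + 1 - ms.sum) * 2 ^ ms.sum :=
            Nat.mul_le_mul_left _ (by omega)
        _ = 2 ^ (r + 1) := by
            rw [← pow_add]
            congr 1
            omega
    · rw [stern_pow_mul, hc1, hmcont]
end

section
/- Let d, l_1, …, l_d ≥ 1 be integers, j ∈ {1,…,d}, and l_j = u + v with u, v ≥ 1. Then K(l_1,…,l_d) ≤ K(l_1,…,l_{j-1}, u, v, l_{j+1},…,l_d), with equality if and only if (j = 1 and u = 1) or (j = d and v = 1). -/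
/-- Auxiliary: continuant of the list with its last entry dropped (0 for the empty list). -/
def dcontN : List ℕ → ℕ
  | [] => 0
  | [_] => 1
  | x :: y :: t => x * dcontN (y :: t) + dcontN t

/-- Auxiliary: continuant of the tail (0 for the empty list). -/
def tcontN : List ℕ → ℕ
  | [] => 0
  | _ :: t => contN t

lemma contN_append : ∀ (a : List ℕ) (h : ℕ) (t : List ℕ),
    contN (a ++ h :: t) = contN a * contN (h :: t) + dcontN a * contN t
  | [], h, t => by simp [contN, dcontN]
  | [x], h, t => by simp [contN, dcontN]
  | x :: y :: s, h, t => by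
    have h1 := contN_append (y :: s) h t
    have h2 := contN_append s h t
    simp only [List.cons_append] at *
    rw [show contN (x :: y :: (s ++ h :: t)) = x * contN (y :: (s ++ h :: t)) + contN (s ++ h :: t) from rfl,
      h1, h2,
      show contN (x :: y :: s) = x * contN (y :: s) + contN s from rfl,
      show dcontN (x :: y :: s) = x * dcontN (y :: s) + dcontN s from rfl]
    ring

lemma one_le_contN : ∀ (l : List ℕ), (∀ x ∈ l, 1 ≤ x) → 1 ≤ contN l
  | [], _ => le_refl 1
  | [x], h => h x (by simp)
  | x :: y :: t, h => by
    have hx : 1 ≤ x := h x (by simp)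
    have hyt : 1 ≤ contN (y :: t) := one_le_contN (y :: t) (fun z hz => h z (by simp [hz]))
    show 1 ≤ x * contN (y :: t) + contN t
    calc 1 ≤ x * contN (y :: t) := Nat.one_le_iff_ne_zero.mpr (by positivity)
    _ ≤ _ := Nat.le_add_right _ _

lemma one_le_dcontN : ∀ (l : List ℕ), l ≠ [] → (∀ x ∈ l, 1 ≤ x) → 1 ≤ dcontN l
  | [x], _, _ => le_refl 1
  | x :: y :: t, _, h => by
    have hx : 1 ≤ x := h x (by simp)
    have hyt : 1 ≤ dcontN (y :: t) :=
      one_le_dcontN (y :: t) (by simp) (fun z hz => h z (by simp [hz]))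
    show 1 ≤ x * dcontN (y :: t) + dcontN t
    calc 1 ≤ x * dcontN (y :: t) := Nat.one_le_iff_ne_zero.mpr (by positivity)
    _ ≤ _ := Nat.le_add_right _ _

lemma key_s14 (a b : List ℕ) (su sv : ℕ) :
    contN (a ++ (su + 1) :: (sv + 1) :: b) =
      contN (a ++ (su + sv + 2) :: b) +
      (su * contN a + dcontN a) * (sv * contN b + tcontN b) := by
  rw [contN_append, contN_append]
  cases b with
  | nil =>
    show contN a * contN [su + 1, sv + 1] + dcontN a * contN [sv + 1] =
      contN a * contN [su + sv + 2] + dcontN a * contN [] +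
      (su * contN a + dcontN a) * (sv * contN [] + tcontN [])
    simp only [contN, tcontN]
    ring
  | cons c b' =>
    show contN a * contN ((su + 1) :: (sv + 1) :: c :: b') + dcontN a * contN ((sv + 1) :: c :: b') =
      contN a * contN ((su + sv + 2) :: c :: b') + dcontN a * contN (c :: b') +
      (su * contN a + dcontN a) * (sv * contN (c :: b') + tcontN (c :: b'))
    rw [show contN ((su + 1) :: (sv + 1) :: c :: b') =
        (su + 1) * contN ((sv + 1) :: c :: b') + contN (c :: b') from rfl,
      show contN ((sv + 1) :: c :: b') = (sv + 1) * contN (c :: b') + contN b' from rfl,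
      show contN ((su + sv + 2) :: c :: b') = (su + sv + 2) * contN (c :: b') + contN b' from rfl,
      show tcontN (c :: b') = contN b' from rfl]
    ring

/-- Let `l1, ..., ld >= 1`, `j` in `{1,...,d}`, and `lj = u + v` with
`u, v >= 1`.  Then `K(l1,...,ld) <= K(l1,...,l(j-1),u,v,l(j+1),...,ld)`, with equality iff
(`j = 1` and `u = 1`) or (`j = d` and `v = 1`).  Here `a` is the list of entries before
position `j` and `b` the list of entries after it. -/
theorem continuant_split_le (a b : List ℕ) (u v : ℕ)
    (ha : ∀ x ∈ a, 1 ≤ x) (hb : ∀ x ∈ b, 1 ≤ x) (hu : 1 ≤ u) (hv : 1 ≤ v) :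
    contN (a ++ (u + v) :: b) ≤ contN (a ++ u :: v :: b) ∧
    (contN (a ++ (u + v) :: b) = contN (a ++ u :: v :: b) ↔
      ((a = [] ∧ u = 1) ∨ (b = [] ∧ v = 1))) := by
  obtain ⟨su, rfl⟩ : ∃ su, u = su + 1 := ⟨u - 1, by omega⟩
  obtain ⟨sv, rfl⟩ : ∃ sv, v = sv + 1 := ⟨v - 1, by omega⟩
  have hsum : su + 1 + (sv + 1) = su + sv + 2 := by ring
  rw [hsum]
  have hk := key_s14 a b su sv
  have hA : 1 ≤ contN a := one_le_contN a ha
  have hB : 1 ≤ contN b := one_le_contN b hb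
  have hP : su * contN a + dcontN a = 0 ↔ (a = [] ∧ su = 0) := by
    constructor
    · intro h0
      cases a with
      | nil => exact ⟨rfl, by simp [dcontN, contN] at h0; omega⟩
      | cons x a' =>
        exfalso
        have := one_le_dcontN (x :: a') (by simp) ha
        omega
    · rintro ⟨rfl, rfl⟩; simp [dcontN]
  have hQ : sv * contN b + tcontN b = 0 ↔ (b = [] ∧ sv = 0) := by
    constructor
    · intro h0
      cases b with
      | nil => constructor; rfl; nlinarith
      | cons c b' =>
        exfalso
        have : 1 ≤ tcontN (c :: b') :=
          one_le_contN b' (fun z hz => hb z (by simp [hz]))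
        omega
    · rintro ⟨rfl, rfl⟩; simp [tcontN]
  constructor
  · omega
  · rw [hk]
    constructor
    · intro h
      have : (su * contN a + dcontN a) * (sv * contN b + tcontN b) = 0 := by omega
      rcases Nat.mul_eq_zero.mp this with h0 | h0
      · left
        obtain ⟨h1, h2⟩ := hP.mp h0
        exact ⟨h1, by omega⟩
      · right
        obtain ⟨h1, h2⟩ := hQ.mp h0
        exact ⟨h1, by omega⟩
    · rintro (⟨rfl, h1⟩ | ⟨rfl, h1⟩)
      · have hz : su * contN ([] : List ℕ) + dcontN [] = 0 := hP.mpr ⟨rfl, by omega⟩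
        have : (su * contN ([] : List ℕ) + dcontN []) * (sv * contN b + tcontN b) = 0 := by
          rw [hz, Nat.zero_mul]
        omega
      · have hz : sv * contN ([] : List ℕ) + tcontN [] = 0 := hQ.mpr ⟨rfl, by omega⟩
        have : (su * contN a + dcontN a) * (sv * contN ([] : List ℕ) + tcontN []) = 0 := by
          rw [hz, Nat.mul_zero]
        omega
end

section
/- For integers p_0, p_1 ≥ 0, K(1,…,1 (p_0 times), 2, 1,…,1 (p_1 times)) = F_{p_0+p_1+3} - F_{p_0} F_{p_1}. -/
lemma contN_ones (p : ℕ) : contN (List.replicate p 1) = Nat.fib (p + 1) := by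
  induction p using Nat.twoStepInduction with
  | zero => simp [contN]
  | one => simp [contN]
  | more p ih1 ih2 =>
    simp only [List.replicate_succ, contN] at *
    rw [ih1, ih2, one_mul]
    show Nat.fib (p + 1 + 1) + Nat.fib (p + 1) = Nat.fib (p + 1 + 2)
    have := Nat.fib_add_two (n := p + 1)
    omega
lemma contN_two_ones (p : ℕ) : contN (2 :: List.replicate p 1) = Nat.fib (p + 3) := by
  cases p with
  | zero => simp [contN]; decide
  | succ n =>
    simp only [List.replicate_succ, contN]
    rw [show (1 :: List.replicate n 1) = List.replicate (n+1) 1 from by simp [List.replicate_succ],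
      contN_ones, contN_ones]
    show 2 * Nat.fib (n + 1 + 1) + Nat.fib (n + 1) = Nat.fib (n + 1 + 1 + 2)
    have h1 : Nat.fib (n + 1 + 1 + 2) = Nat.fib (n + 1 + 1) + Nat.fib (n + 1 + 1 + 1) :=
      Nat.fib_add_two
    have h2 : Nat.fib (n + 1 + 1 + 1) = Nat.fib (n + 1) + Nat.fib (n + 1 + 1) :=
      Nat.fib_add_two
    show 2 * Nat.fib (n + 1 + 1) + Nat.fib (n + 1) = Nat.fib (n + 1 + 1 + 2)
    omega


/-- For_p0, p1 >= 0:
`K(1,...,1 (p0 times), 2, 1,...,1 (p1 times)) = F(p0+p1+3) - F(p0) * F(p1)`. -/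
theorem continuant_ones_two (p0 p1 : ℕ) :
    (contN (List.replicate p0 1 ++ 2 :: List.replicate p1 1) : ℤ) =
      Nat.fib (p0 + p1 + 3) - Nat.fib p0 * Nat.fib p1 := by
  induction p0 using Nat.twoStepInduction with
  | zero => simp [contN_two_ones]
  | one =>
    simp only [List.replicate_succ, List.replicate_zero, List.nil_append, List.cons_append,
      contN]
    rw [contN_two_ones, contN_ones]
    have f1 : Nat.fib (1 + p1 + 3) = Nat.fib (p1 + 3) + Nat.fib (p1 + 2) := by
      rw [show 1 + p1 + 3 = p1 + 2 + 2 by omega]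
      have h : Nat.fib (p1 + 2 + 2) = Nat.fib (p1 + 2) + Nat.fib (p1 + 3) := Nat.fib_add_two
      omega
    have f2 : Nat.fib (p1 + 2) = Nat.fib p1 + Nat.fib (p1 + 1) := Nat.fib_add_two
    push_cast [f1, f2]
    simp [Nat.fib_one]
    ring
  | more p ih2 ih1 =>
    have e : List.replicate (p+2) 1 ++ 2 :: List.replicate p1 1 =
        1 :: (List.replicate (p+1) 1 ++ 2 :: List.replicate p1 1) := by
      simp [List.replicate_succ]
    have e2 : List.replicate (p+1) 1 ++ 2 :: List.replicate p1 1 =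
        1 :: (List.replicate p 1 ++ 2 :: List.replicate p1 1) := by
      simp [List.replicate_succ]
    have key : contN (List.replicate (p+2) 1 ++ 2 :: List.replicate p1 1) =
        contN (List.replicate (p+1) 1 ++ 2 :: List.replicate p1 1) +
        contN (List.replicate p 1 ++ 2 :: List.replicate p1 1) := by
      rw [e, e2]
      simp only [contN]
      rw [← e2]
      ring
    have f1 : Nat.fib (p + 2 + p1 + 3) = Nat.fib (p + 1 + p1 + 3) + Nat.fib (p + p1 + 3) := by
      rw [show p + 2 + p1 + 3 = (p + p1 + 3) + 2 by ring]
      have h1 : Nat.fib (p + p1 + 3 + 2) = Nat.fib (p + p1 + 3) + Nat.fib (p + p1 + 4) :=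
        Nat.fib_add_two
      have h2 : Nat.fib (p + 1 + p1 + 3) = Nat.fib (p + p1 + 4) := by
        rw [show p + 1 + p1 + 3 = p + p1 + 4 by omega]
      omega
    have f2 : Nat.fib (p + 2) = Nat.fib p + Nat.fib (p + 1) := Nat.fib_add_two
    rw [key]
    push_cast [f1, f2, ih1, ih2]
    ring
end

section
/- For integers p_0, p_1, p_2 ≥ 0, K(1^{p_0}, 2, 1^{p_1}, 2, 1^{p_2}) = (F_{p_0+p_1+p_2+4} + F_{p_0+p_1+p_2+2} - F_{p_0+p_1+p_2-4}) - (F_{p_1}(F_{p_0-1} F_{p_2-1} + 3 F_{p_0-2} F_{p_2-1} + 3 F_{p_0-1} F_{p_2-2}) + 2 F_{p_0-2} F_{p_1+1} F_{p_2-2}), where 1^{p} denotes p consecutive entries equal to 1. -/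
private lemma contN_key (F : ℤ → ℤ) (h0 : F 0 = 0) (h1 : F 1 = 1)
    (hrec : ∀ n : ℤ, F n = F (n - 1) + F (n - 2)) (a b c : ℤ) :
    F (a+1) * (2 * (F (b+1) * (2*F (c+1) + F c) + F b * F (c+1))
        + (F b * (2*F (c+1) + F c) + F (b-1) * F (c+1)))
      + F a * (F (b+1) * (2*F (c+1) + F c) + F b * F (c+1)) =
    (F (a + b + c + 4) + F (a + b + c + 2) - F (a + b + c - 4))
        - (F b * (F (a - 1) * F (c - 1)
              + 3 * F (a - 2) * F (c - 1)
              + 3 * F (a - 1) * F (c - 2))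
           + 2 * F (a - 2) * F (b + 1) * F (c - 2)) := by
  -- small values
  have m1 : F (-1) = 1 := by have := hrec 1; norm_num at this; linarith
  have m2 : F (-2) = -1 := by have := hrec 0; norm_num at this; linarith
  have m3 : F (-3) = 2 := by have := hrec (-1); norm_num at this; linarith
  have m4 : F (-4) = -3 := by have := hrec (-2); norm_num at this; linarith
  have m5 : F (-5) = 5 := by have := hrec (-3); norm_num at this; linarith
  have m6 : F (-6) = -8 := by have := hrec (-4); norm_num at this; linarith
  have f2 : F 2 = 1 := by have := hrec 2; norm_num at this; linarith
  have f3 : F 3 = 2 := by have := hrec 3; norm_num at this; linarith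
  have f4 : F 4 = 3 := by have := hrec 4; norm_num at this; linarith
  -- addition formula
  have main : ∀ y x : ℤ, F (x + y) = F (x+1) * F y + F x * F (y-1)
      ∧ F (x + y - 1) = F (x+1) * F (y-1) + F x * F (y-2) := by
    intro y
    induction y using Int.induction_on with
    | zero =>
      intro x
      have hx := hrec (x + 1)
      rw [show x + 1 - 1 = x by ring, show x + 1 - 2 = x - 1 by ring] at hx
      constructor
      · rw [show x + (0:ℤ) = x by ring, show (0:ℤ) - 1 = -1 by ring, h0, m1]; ring
      · rw [show x + (0:ℤ) - 1 = x - 1 by ring, show (0:ℤ) - 1 = -1 by ring,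
          show (0:ℤ) - 2 = -2 by ring, m1, m2]
        linarith
    | succ n ih =>
      intro x
      obtain ⟨i1, i2⟩ := ih x
      have hr := hrec (x + (n:ℤ) + 1)
      rw [show x + (n:ℤ) + 1 - 1 = x + (n:ℤ) by ring,
        show x + (n:ℤ) + 1 - 2 = x + (n:ℤ) - 1 by ring] at hr
      have hb := hrec ((n:ℤ) + 1)
      rw [show (n:ℤ) + 1 - 1 = (n:ℤ) by ring, show (n:ℤ) + 1 - 2 = (n:ℤ) - 1 by ring] at hb
      have hb2 := hrec (n:ℤ)
      constructor
      · rw [show x + ((n:ℤ) + 1) = x + (n:ℤ) + 1 by ring, show (n:ℤ) + 1 - 1 = (n:ℤ) by ring]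
        linear_combination hr + i1 + i2 - F (x+1) * hb - F x * hb2
      · rw [show x + ((n:ℤ) + 1) - 1 = x + (n:ℤ) by ring,
          show (n:ℤ) + 1 - 1 = (n:ℤ) by ring, show (n:ℤ) + 1 - 2 = (n:ℤ) - 1 by ring]
        exact i1
    | pred n ih =>
      intro x
      obtain ⟨i1, i2⟩ := ih x
      have hA := hrec (x + -(n:ℤ))
      have hB := hrec (-(n:ℤ))
      have hC := hrec (-(n:ℤ) - 1)
      rw [show -(n:ℤ) - 1 - 1 = -(n:ℤ) - 2 by ring,
        show -(n:ℤ) - 1 - 2 = -(n:ℤ) - 3 by ring] at hC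
      constructor
      · rw [show x + (-(n:ℤ) - 1) = x + -(n:ℤ) - 1 by ring,
          show -(n:ℤ) - 1 - 1 = -(n:ℤ) - 2 by ring]
        exact i2
      · rw [show x + (-(n:ℤ) - 1) - 1 = x + -(n:ℤ) - 2 by ring,
          show -(n:ℤ) - 1 - 1 = -(n:ℤ) - 2 by ring,
          show -(n:ℤ) - 1 - 2 = -(n:ℤ) - 3 by ring]
        linear_combination (-1) * hA + i1 - i2 + F (x+1) * hB + F x * hC
  have addf : ∀ x y : ℤ, F (x + y) = F (x+1) * F y + F x * F (y-1) := fun x y => (main y x).1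
  -- one-variable expansions
  have hc4 : F (c+4) = 3 * F (c+1) + 2 * F c := by
    have := addf c 4
    rw [show (4:ℤ) - 1 = 3 by norm_num, f4, f3] at this
    linarith
  have hc3 : F (c+3) = 2 * F (c+1) + F c := by
    have := addf c 3
    rw [show (3:ℤ) - 1 = 2 by norm_num, f3, f2] at this
    linarith
  have hc2 : F (c+2) = F (c+1) + F c := by
    have := hrec (c+2)
    rw [show c + 2 - 1 = c + 1 by ring, show c + 2 - 2 = c by ring] at this
    linarith
  have hcm1 : F (c-1) = F (c+1) - F c := by
    have := hrec (c+1)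
    rw [show c + 1 - 1 = c by ring, show c + 1 - 2 = c - 1 by ring] at this
    linarith
  have hcm2 : F (c-2) = 2 * F c - F (c+1) := by
    have := hrec c
    linarith
  have hcm4 : F (c-4) = -3 * F (c+1) + 5 * F c := by
    have := addf c (-4)
    rw [show c + (-4:ℤ) = c - 4 by ring, show (-4:ℤ) - 1 = -5 by norm_num, m4, m5] at this
    linarith
  have hcm5 : F (c-5) = 5 * F (c+1) - 8 * F c := by
    have := addf c (-5)
    rw [show c + (-5:ℤ) = c - 5 by ring, show (-5:ℤ) - 1 = -6 by norm_num, m5, m6] at this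
    linarith
  have ham1 : F (a-1) = F (a+1) - F a := by
    have := hrec (a+1)
    rw [show a + 1 - 1 = a by ring, show a + 1 - 2 = a - 1 by ring] at this
    linarith
  have ham2 : F (a-2) = 2 * F a - F (a+1) := by
    have := hrec a
    linarith
  have hbm1 : F (b-1) = F (b+1) - F b := by
    have := hrec (b+1)
    rw [show b + 1 - 1 = b by ring, show b + 1 - 2 = b - 1 by ring] at this
    linarith
  -- two-variable expansions
  have hab1 : F (a+b+1) = F (a+1) * F (b+1) + F a * F b := by
    have := addf a (b+1)
    rw [show a + (b+1) = a + b + 1 by ring, show b + 1 - 1 = b by ring] at this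
    exact this
  have hab0 : F (a+b) = F (a+1) * F b + F a * F (b-1) := addf a b
  -- three-variable expansions
  have hT4 : F (a+b+c+4) =
      (F (a+1) * F (b+1) + F a * F b) * (3 * F (c+1) + 2 * F c)
        + (F (a+1) * F b + F a * F (b-1)) * (2 * F (c+1) + F c) := by
    have h := addf (a+b) (c+4)
    rw [show a + b + (c+4) = a + b + c + 4 by ring, show c + 4 - 1 = c + 3 by ring] at h
    rw [h, hab1, hab0, hc4, hc3]
  have hT2 : F (a+b+c+2) =
      (F (a+1) * F (b+1) + F a * F b) * (F (c+1) + F c)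
        + (F (a+1) * F b + F a * F (b-1)) * F (c+1) := by
    have h := addf (a+b) (c+2)
    rw [show a + b + (c+2) = a + b + c + 2 by ring, show c + 2 - 1 = c + 1 by ring] at h
    rw [h, hab1, hab0, hc2]
  have hTm4 : F (a+b+c-4) =
      (F (a+1) * F (b+1) + F a * F b) * (-3 * F (c+1) + 5 * F c)
        + (F (a+1) * F b + F a * F (b-1)) * (5 * F (c+1) - 8 * F c) := by
    have h := addf (a+b) (c-4)
    rw [show a + b + (c-4) = a + b + c - 4 by ring, show c - 4 - 1 = c - 5 by ring] at h
    rw [h, hab1, hab0, hcm4, hcm5]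
  rw [hT4, hT2, hTm4, hbm1, ham1, ham2, hcm1, hcm2]
  ring

/-- For `p0, p1, p2 >= 0`, with `F` the Fibonacci sequence extended to all
integers: `K(1^(p0), 2, 1^(p1), 2, 1^(p2)) =
(F(p0+p1+p2+4) + F(p0+p1+p2+2) - F(p0+p1+p2-4))
 - (F(p1) (F(p0-1) F(p2-1) + 3 F(p0-2) F(p2-1) + 3 F(p0-1) F(p2-2)) + 2 F(p0-2) F(p1+1) F(p2-2))`. -/
theorem continuant_ones_two_two (F : ℤ → ℤ) (h0 : F 0 = 0) (h1 : F 1 = 1)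
    (hrec : ∀ n : ℤ, F n = F (n - 1) + F (n - 2)) (p0 p1 p2 : ℕ) :
    (contN (List.replicate p0 1 ++ 2 :: List.replicate p1 1 ++ 2 :: List.replicate p2 1) : ℤ) =
      (F ((p0 : ℤ) + p1 + p2 + 4) + F ((p0 : ℤ) + p1 + p2 + 2) - F ((p0 : ℤ) + p1 + p2 - 4))
        - (F (p1 : ℤ) * (F ((p0 : ℤ) - 1) * F ((p2 : ℤ) - 1)
              + 3 * F ((p0 : ℤ) - 2) * F ((p2 : ℤ) - 1)
              + 3 * F ((p0 : ℤ) - 1) * F ((p2 : ℤ) - 2))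
           + 2 * F ((p0 : ℤ) - 2) * F ((p1 : ℤ) + 1) * F ((p2 : ℤ) - 2)) := by
  have m1 : F (-1) = 1 := by have := hrec 1; norm_num at this; linarith
  have f2 : F 2 = 1 := by have := hrec 2; norm_num at this; linarith
  have hstep : ∀ n : ℤ, F (n + 2) = F (n + 1) + F n := by
    intro n
    have := hrec (n + 2)
    rw [show n + 2 - 1 = n + 1 by ring, show n + 2 - 2 = n by ring] at this
    exact this
  -- continuant of a run of ones
  have hrepl : ∀ n : ℕ, (contN (List.replicate n 1) : ℤ) = F ((n : ℤ) + 1) := by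
    intro n
    induction n using Nat.twoStepInduction with
    | zero => simpa [contN] using h1.symm
    | one => norm_num [List.replicate_one, contN, f2]
    | more n ih1 ih2 =>
      have e : contN (List.replicate (n+2) 1)
          = 1 * contN (List.replicate (n+1) 1) + contN (List.replicate n 1) := rfl
      rw [e]
      push_cast
      rw [ih1, ih2]
      linear_combination (norm := (push_cast; ring_nf)) -hstep ((n : ℤ) + 1)
  -- splitting off a run of ones on the left
  have split : ∀ (n y : ℕ) (t : List ℕ),
      (contN (List.replicate n 1 ++ y :: t) : ℤ)
        = F ((n : ℤ) + 1) * contN (y :: t) + F (n : ℤ) * contN t := by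
    intro n y t
    induction n using Nat.twoStepInduction with
    | zero => simp [h0, h1]
    | one =>
      have e : contN (List.replicate 1 1 ++ y :: t) = 1 * contN (y :: t) + contN t := rfl
      rw [e]
      push_cast
      norm_num [f2, h1]
    | more n ih1 ih2 =>
      have e : contN (List.replicate (n+2) 1 ++ y :: t)
          = 1 * contN (List.replicate (n+1) 1 ++ y :: t)
            + contN (List.replicate n 1 ++ y :: t) := rfl
      rw [e]
      push_cast
      linear_combination (norm := (push_cast; ring_nf)) ih1 + ih2
        - (contN (y :: t) : ℤ) * hstep ((n : ℤ) + 1) - (contN t : ℤ) * hstep (n : ℤ)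
  have hV := hrepl p2
  have hW : (contN (2 :: List.replicate p2 1) : ℤ) = 2 * F ((p2:ℤ) + 1) + F (p2:ℤ) := by
    cases p2 with
    | zero =>
      have e : contN (2 :: List.replicate 0 1) = 2 := rfl
      rw [e]
      norm_num [h0, h1]
    | succ k =>
      have e : contN (2 :: List.replicate (k+1) 1)
          = 2 * contN (List.replicate (k+1) 1) + contN (List.replicate k 1) := rfl
      rw [e]
      push_cast
      rw [hrepl (k+1), hrepl k]
      push_cast
      ring_nf
  have hX : (contN (2 :: (List.replicate p1 1 ++ 2 :: List.replicate p2 1)) : ℤ)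
      = 2 * (contN (List.replicate p1 1 ++ 2 :: List.replicate p2 1) : ℤ)
        + (F (p1:ℤ) * (contN (2 :: List.replicate p2 1) : ℤ)
           + F ((p1:ℤ) - 1) * (contN (List.replicate p2 1) : ℤ)) := by
    cases p1 with
    | zero =>
      have e : contN (2 :: (List.replicate 0 1 ++ 2 :: List.replicate p2 1))
          = 2 * contN (List.replicate 0 1 ++ 2 :: List.replicate p2 1)
            + contN (List.replicate p2 1) := rfl
      rw [e]
      push_cast [h0]
      rw [m1]
      ring
    | succ k =>
      have e : contN (2 :: (List.replicate (k+1) 1 ++ 2 :: List.replicate p2 1))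
          = 2 * contN (List.replicate (k+1) 1 ++ 2 :: List.replicate p2 1)
            + contN (List.replicate k 1 ++ 2 :: List.replicate p2 1) := rfl
      rw [e]
      push_cast
      rw [split k 2 (List.replicate p2 1)]
      ring_nf
  rw [List.append_assoc, List.cons_append,
    split p0 2 (List.replicate p1 1 ++ 2 :: List.replicate p2 1), hX,
    split p1 2 (List.replicate p2 1), hW, hV]
  linear_combination (norm := ring_nf)
    contN_key F h0 h1 hrec (p0:ℤ) (p1:ℤ) (p2:ℤ)
end
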